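/- arXiv:2305.12629 — 7 statements merged into one kernel-verified Lean document; each statement's English description precedes it below -/
import Mathlib

section
/- Let 0 < a < b, let C > 0, and let E : ℝ → ℝ be nondecreasing on [a, b] with E(a) > 0. Suppose that for almost every r ∈ [a, b] the derivative of E at r satisfies E'(r) ≥ C · E(r)² / r. Then E(a) ≤ 1 / ( C · log(b/a) + 1/E(b) ); equivalently, 1/E(a) − 1/E(b) ≥ C · log(b/a). -/
open MeasureTheory Filter
open scoped Topology

/-- ODE comparison: if `E` is nondecreasing on `[a,b]`, positive at `a`, and its (a.e.
existing) derivative satisfies `E'(r) ≥ C E(r)²/r` a.e., then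
`E(a) ≤ 1/(C log(b/a) + 1/E(b))`. -/
theorem decay_from_differential_inequality (a b C : ℝ) (ha : 0 < a) (hab : a < b)
    (hC : 0 < C) (E : ℝ → ℝ) (hmono : MonotoneOn E (Set.Icc a b)) (hEa : 0 < E a)
    (hderiv : ∀ᵐ r : ℝ, r ∈ Set.Icc a b → C * E r ^ 2 / r ≤ deriv E r) :
    E a ≤ 1 / (C * Real.log (b / a) + 1 / E b) := by
  have hamem : a ∈ Set.Icc a b := ⟨le_rfl, hab.le⟩
  have hbmem : b ∈ Set.Icc a b := ⟨hab.le, le_rfl⟩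
  -- positivity of E on [a,b]
  have hEpos : ∀ x ∈ Set.Icc a b, 0 < E x := fun x hx =>
    lt_of_lt_of_le hEa (hmono hamem hx hx.1)
  -- the auxiliary monotone function g, extension of E to ℝ
  set g : ℝ → ℝ := fun x => E (Set.projIcc a b hab.le x : ℝ) with hg
  have hgmem : ∀ x, (Set.projIcc a b hab.le x : ℝ) ∈ Set.Icc a b := fun x =>
    (Set.projIcc a b hab.le x).2
  have hgpos : ∀ x, 0 < g x := fun x => hEpos _ (hgmem x)
  have hgmono : Monotone g := fun x y hxy =>
    hmono (hgmem x) (hgmem y) (Set.monotone_projIcc hab.le hxy)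
  have hgeq : ∀ x ∈ Set.Icc a b, g x = E x := by
    intro x hx
    simp [hg, Set.projIcc_of_mem hab.le hx]
  -- f := -(1/g) is monotone
  set f : ℝ → ℝ := fun x => -(g x)⁻¹ with hfdef
  have hfmono : Monotone f := by
    intro x y hxy
    have := hgmono hxy
    have hx := hgpos x
    simp only [hfdef, neg_le_neg_iff]
    exact inv_anti₀ hx this
  set μ := hfmono.stieltjesFunction.measure with hμ
  -- Step A: a.e. on Ioo a b, ofReal (C/r) ≤ rnDeriv μ volume r
  have hae : ∀ᵐ r : ℝ, r ∈ Set.Ioo a b → ENNReal.ofReal (C / r) ≤ μ.rnDeriv volume r := by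
    filter_upwards [hfmono.ae_hasDerivAt, hderiv, Measure.rnDeriv_lt_top μ volume]
      with r hr hd hlt hrmem
    have hrI : r ∈ Set.Icc a b := Set.Ioo_subset_Icc_self hrmem
    have hEr : 0 < E r := hEpos r hrI
    set d := (μ.rnDeriv volume r).toReal with hdd
    -- near r, f = fun x => -(E x)⁻¹, and E = fun x => -(f x)⁻¹
    have hnhds : Set.Ioo a b ∈ 𝓝 r := isOpen_Ioo.mem_nhds hrmem
    have hfr : f r = -(E r)⁻¹ := by simp [hfdef, hgeq r hrI]
    have hfrne : f r ≠ 0 := by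
      rw [hfr]; simpa using ne_of_gt (inv_pos.2 hEr)
    have hfE : ∀ x ∈ Set.Ioo a b, E x = -(f x)⁻¹ := by
      intro x hx
      have hxI : x ∈ Set.Icc a b := Set.Ioo_subset_Icc_self hx
      have : f x = -(E x)⁻¹ := by simp [hfdef, hgeq x hxI]
      rw [this, inv_neg, inv_inv, neg_neg]
    -- derivative of E at r
    have hdf : HasDerivAt f d r := hr
    have hinv : HasDerivAt (fun x => -(f x)⁻¹) (-(-d / f r ^ 2)) r := (hdf.inv hfrne).neg
    have hdE : HasDerivAt E (-(-d / f r ^ 2)) r := by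
      apply hinv.congr_of_eventuallyEq
      filter_upwards [hnhds] with x hx
      exact hfE x hx
    have hfr2 : f r ^ 2 = ((E r) ^ 2)⁻¹ := by
      rw [hfr]; rw [neg_pow]; simp [inv_pow]
    have hderivE : deriv E r = d * E r ^ 2 := by
      rw [hdE.deriv, hfr2]
      field_simp
    have hkey : C / r ≤ d := by
      have h1 : C * E r ^ 2 / r ≤ d * E r ^ 2 := by rw [← hderivE]; exact hd hrI
      have h2 : C * E r ^ 2 / r = C / r * E r ^ 2 := by ring
      rw [h2] at h1
      exact le_of_mul_le_mul_right h1 (pow_pos hEr 2)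
    calc ENNReal.ofReal (C / r) ≤ ENNReal.ofReal d := ENNReal.ofReal_le_ofReal hkey
      _ = μ.rnDeriv volume r := ENNReal.ofReal_toReal hlt.ne
  -- Step B: lintegral comparison
  have hmeas : MeasurableSet (Set.Ioo a b) := measurableSet_Ioo
  have hB : ∫⁻ r in Set.Ioo a b, ENNReal.ofReal (C / r) ≤ μ (Set.Ioo a b) := by
    refine le_trans ?_ (Measure.setLIntegral_rnDeriv_le (μ := μ) (ν := volume) (Set.Ioo a b))
    refine lintegral_mono_ae ?_
    exact (ae_restrict_iff' hmeas).2 hae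
  -- μ (Ioo a b) ≤ ofReal (f b - f a)
  have hμIoo : μ (Set.Ioo a b) ≤ ENNReal.ofReal (f b - f a) := by
    rw [hμ, StieltjesFunction.measure_Ioo]
    apply ENNReal.ofReal_le_ofReal
    have h1 : f a ≤ hfmono.stieltjesFunction a := by
      rw [hfmono.stieltjesFunction_eq]
      exact hfmono.le_rightLim le_rfl
    have h2 : Function.leftLim (hfmono.stieltjesFunction) b ≤ f b := by
      have hne : (𝓝[<] b) ≠ ⊥ := by
        rw [← neBot_iff]; infer_instance
      rw [(hfmono.stieltjesFunction.mono.leftLim_eq_sSup (x := b))]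
      apply csSup_le
      · exact ⟨hfmono.stieltjesFunction a, Set.mem_image_of_mem _ hab⟩
      · rintro x ⟨y, hy, rfl⟩
        rw [hfmono.stieltjesFunction_eq]
        exact hfmono.rightLim_le hy
    linarith
  -- Step C: compute the lintegral
  have hcont : ContinuousOn (fun r : ℝ => C / r) (Set.Icc a b) := by
    apply ContinuousOn.div continuousOn_const continuousOn_id
    intro x hx
    exact ne_of_gt (lt_of_lt_of_le ha hx.1)
  have hint : IntegrableOn (fun r : ℝ => C / r) (Set.Ioo a b) := by
    exact (hcont.integrableOn_Icc).mono_set Set.Ioo_subset_Icc_self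
  have hnn : 0 ≤ᵐ[volume.restrict (Set.Ioo a b)] fun r : ℝ => C / r := by
    refine (ae_restrict_iff' hmeas).2 (ae_of_all _ fun r hr => ?_)
    exact le_of_lt (div_pos hC (lt_of_lt_of_le ha hr.1.le))
  have hC1 : ∫ r in Set.Ioo a b, C / r = C * Real.log (b / a) := by
    rw [← MeasureTheory.integral_Ioc_eq_integral_Ioo,
      ← intervalIntegral.integral_of_le hab.le]
    have : ∀ r : ℝ, C / r = C * (1 / r) := fun r => by ring
    simp_rw [this]
    rw [intervalIntegral.integral_const_mul, integral_one_div]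
    intro h
    rcases h with ⟨h1, h2⟩
    simp only [inf_le_iff, le_sup_iff] at h1 h2
    rcases h1 with h | h <;> linarith
  have hC2 : ENNReal.ofReal (C * Real.log (b / a)) =
      ∫⁻ r in Set.Ioo a b, ENNReal.ofReal (C / r) := by
    rw [← hC1]
    exact ofReal_integral_eq_lintegral_ofReal hint hnn
  -- combine
  have hfin : C * Real.log (b / a) ≤ f b - f a := by
    have h := hC2 ▸ (hB.trans hμIoo)
    have hfab : 0 ≤ f b - f a := sub_nonneg.2 (hfmono hab.le)
    exact (ENNReal.ofReal_le_ofReal_iff hfab).1 h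
  -- f b - f a = 1/E a - 1/E b
  have hfa : f a = -(E a)⁻¹ := by simp [hfdef, hgeq a hamem]
  have hfb : f b = -(E b)⁻¹ := by simp [hfdef, hgeq b hbmem]
  rw [hfa, hfb] at hfin
  have hEb : 0 < E b := hEpos b hbmem
  have hD : 0 < C * Real.log (b / a) + 1 / E b := by
    have hlog : 0 < Real.log (b / a) := Real.log_pos (by rw [lt_div_iff₀ ha]; linarith)
    positivity
  rw [le_div_iff₀ hD]
  have h2 : E a * (C * Real.log (b / a) + 1 / E b) ≤ E a * (E a)⁻¹ := by
    apply mul_le_mul_of_nonneg_left _ hEa.le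
    rw [one_div]; linarith
  rwa [mul_inv_cancel₀ hEa.ne'] at h2
end

section
/- Let C > 0 and let E : ℝ → ℝ be nonnegative and nondecreasing on (0, ∞), and suppose that for almost every r ∈ (0, ∞) the derivative of E at r satisfies E'(r) ≥ C · E(r)² / r. Then E(r) = 0 for every r > 0. -/
open MeasureTheory Filter
open scoped Topology

/-- Auxiliary recursive sequence used to derive a contradiction. -/
noncomputable def vfdIterSeq (C : ℝ) (E : ℝ → ℝ) (r₀ : ℝ) : ℕ → ℝ
  | 0 => r₀
  | n + 1 => vfdIterSeq C E r₀ n * Real.exp (4 / (C * E (vfdIterSeq C E r₀ n)))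

/-- Key step: integrating the differential inequality over `[a, √(ab)]` gives a
logarithmic growth lower bound. -/
theorem vfd_step (C : ℝ) (hC : 0 < C) (E : ℝ → ℝ)
    (hE0 : ∀ r : ℝ, 0 < r → 0 ≤ E r) (hmono : MonotoneOn E (Set.Ioi 0))
    (hderiv : ∀ᵐ r : ℝ, 0 < r → C * E r ^ 2 / r ≤ deriv E r)
    {a b : ℝ} (ha : 0 < a) (hab : a < b) :
    E a + C * E a ^ 2 / 2 * (Real.log b - Real.log a) ≤ E b := by
  set F : ℝ → ℝ := fun x => E (max x a) with hF_def
  have hb : 0 < b := ha.trans hab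
  have hF : Monotone F := by
    intro x y hxy
    exact hmono (Set.mem_Ioi.2 (lt_max_of_lt_right ha)) (Set.mem_Ioi.2 (lt_max_of_lt_right ha))
      (max_le_max hxy le_rfl)
  set g := hF.stieltjesFunction with hg_def
  set μ := g.measure with hμ_def
  -- the geometric midpoint
  set m : ℝ := Real.sqrt (a * b) with hm_def
  have hm_pos : 0 < m := Real.sqrt_pos.2 (by positivity)
  have ham : a < m := by
    have : Real.sqrt (a * a) < Real.sqrt (a * b) :=
      Real.sqrt_lt_sqrt (by positivity) (by nlinarith)
    simpa [Real.sqrt_mul_self ha.le] using this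
  have hmb : m < b := by
    have : Real.sqrt (a * b) < Real.sqrt (b * b) :=
      Real.sqrt_lt_sqrt (by positivity) (by nlinarith)
    simpa [Real.sqrt_mul_self hb.le] using this
  have hlogm : Real.log m = (Real.log a + Real.log b) / 2 := by
    rw [hm_def, Real.sqrt_eq_rpow, Real.log_rpow (by positivity), Real.log_mul ha.ne' hb.ne']
    ring
  set c : ℝ := C * E a ^ 2 with hc_def
  have hc0 : 0 ≤ c := by have := hE0 a ha; positivity
  -- a.e. lower bound on the Radon-Nikodym derivative on `Ioc a m`
  have hae : ∀ᵐ x ∂(volume.restrict (Set.Ioc a m)),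
      ENNReal.ofReal (c / x) ≤ μ.rnDeriv volume x := by
    have h1 : ∀ᵐ x : ℝ, HasDerivAt F ((μ.rnDeriv volume x).toReal) x := hF.ae_hasDerivAt
    have h2 : ∀ᵐ x : ℝ, μ.rnDeriv volume x < ⊤ := Measure.rnDeriv_lt_top μ volume
    filter_upwards [ae_restrict_of_ae h1, ae_restrict_of_ae h2, ae_restrict_of_ae hderiv,
      ae_restrict_mem measurableSet_Ioc] with x hd hlt hineq hx
    have hxa : a < x := hx.1
    have hx0 : 0 < x := ha.trans hxa
    -- F = E near x
    have hFE : F =ᶠ[𝓝 x] E := by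
      filter_upwards [lt_mem_nhds hxa] with y hy
      simp [hF_def, max_eq_left hy.le]
    have hdE : HasDerivAt E ((μ.rnDeriv volume x).toReal) x := hd.congr_of_eventuallyEq hFE.symm
    have hderivEx : deriv E x = (μ.rnDeriv volume x).toReal := hdE.deriv
    have hEax : E a ≤ E x := hmono ha hx0 hxa.le
    have hEa0 : 0 ≤ E a := hE0 a ha
    have hkey : c / x ≤ (μ.rnDeriv volume x).toReal := by
      rw [← hderivEx]
      refine le_trans ?_ (hineq hx0)
      have hsq : E a ^ 2 ≤ E x ^ 2 := by nlinarith
      have hnum : c ≤ C * E x ^ 2 := by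
        rw [hc_def]
        exact mul_le_mul_of_nonneg_left hsq hC.le
      gcongr
    calc ENNReal.ofReal (c / x) ≤ ENNReal.ofReal ((μ.rnDeriv volume x).toReal) :=
          ENNReal.ofReal_le_ofReal hkey
      _ = μ.rnDeriv volume x := ENNReal.ofReal_toReal hlt.ne
  -- value of the lower integral
  have hint : ∫ x in Set.Ioc a m, c / x = c * (Real.log m - Real.log a) := by
    rw [← intervalIntegral.integral_of_le ham.le]
    have h0 : (0 : ℝ) ∉ Set.uIcc a m := by
      rw [Set.uIcc_of_le ham.le]
      rintro ⟨h, -⟩; exact absurd h (not_le.2 ha)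
    have : ∫ x in a..m, c / x = c * ∫ x in a..m, 1 / x := by
      rw [← intervalIntegral.integral_const_mul]
      congr 1; ext x; ring
    have h1d : ∫ x in a..m, 1 / x = Real.log (m / a) := integral_one_div h0
    rw [this, h1d, Real.log_div hm_pos.ne' ha.ne']
  have hIntegrable : IntegrableOn (fun x => c / x) (Set.Ioc a m) := by
    apply (ContinuousOn.integrableOn_Icc ?_).mono_set Set.Ioc_subset_Icc_self
    exact continuousOn_const.div continuousOn_id
      (fun x hx => ne_of_gt (lt_of_lt_of_le ha hx.1))
  have hnn : 0 ≤ᵐ[volume.restrict (Set.Ioc a m)] fun x => c / x := by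
    filter_upwards [ae_restrict_mem measurableSet_Ioc] with x hx
    have : 0 < x := ha.trans hx.1
    positivity
  -- chain of inequalities
  have chain : ENNReal.ofReal (c * (Real.log m - Real.log a)) ≤ ENNReal.ofReal (E b - E a) := by
    calc ENNReal.ofReal (c * (Real.log m - Real.log a))
        = ∫⁻ x in Set.Ioc a m, ENNReal.ofReal (c / x) := by
          rw [← hint, ← ofReal_integral_eq_lintegral_ofReal hIntegrable hnn]
      _ ≤ ∫⁻ x in Set.Ioc a m, μ.rnDeriv volume x := lintegral_mono_ae hae
      _ ≤ μ (Set.Ioc a m) := Measure.setLIntegral_rnDeriv_le _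
      _ = ENNReal.ofReal (g m - g a) := g.measure_Ioc a m
      _ ≤ ENNReal.ofReal (E b - E a) := by
          apply ENNReal.ofReal_le_ofReal
          have h1 : g m ≤ F b := by
            rw [hg_def, hF.stieltjesFunction_eq]
            exact hF.rightLim_le hmb
          have h2 : F a ≤ g a := by
            rw [hg_def, hF.stieltjesFunction_eq]
            exact hF.le_rightLim le_rfl
          have hFa : F a = E a := by simp [hF_def]
          have hFb : F b = E b := by simp [hF_def, max_eq_left hab.le]
          linarith [h1, h2, hFa ▸ h2, hFb ▸ h1]
  have hmain : c * (Real.log m - Real.log a) ≤ E b - E a := by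
    have hEab : 0 ≤ E b - E a := sub_nonneg.2 (hmono ha hb hab.le)
    exact (ENNReal.ofReal_le_ofReal_iff hEab).1 chain
  have : Real.log m - Real.log a = (Real.log b - Real.log a) / 2 := by
    rw [hlogm]; ring
  rw [this] at hmain
  nlinarith [hmain]

/-- Liouville-type consequence of the differential inequality: a nonnegative nondecreasing
function on `(0,∞)` whose (a.e. existing) derivative satisfies `E'(r) ≥ C E(r)²/r` a.e.
vanishes identically. -/
theorem vanishing_from_differential_inequality (C : ℝ) (hC : 0 < C) (E : ℝ → ℝ)
    (hE0 : ∀ r : ℝ, 0 < r → 0 ≤ E r) (hmono : MonotoneOn E (Set.Ioi 0))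
    (hderiv : ∀ᵐ r : ℝ, 0 < r → C * E r ^ 2 / r ≤ deriv E r) :
    ∀ r : ℝ, 0 < r → E r = 0 := by
  intro r₀ hr₀
  by_contra hne
  have he : 0 < E r₀ := lt_of_le_of_ne (hE0 r₀ hr₀) (Ne.symm hne)
  set e := E r₀ with he_def
  set K : ℝ := 8 / (C * e) with hK_def
  have hK0 : 0 < K := by positivity
  set a : ℕ → ℝ := vfdIterSeq C E r₀ with ha_def
  have key : ∀ n : ℕ, 0 < a n ∧ 2 ^ n * e ≤ E (a n) ∧
      Real.log (a n) ≤ Real.log r₀ + K * (1 - (1/2 : ℝ) ^ n) := by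
    intro n
    induction n with
    | zero => refine ⟨hr₀, by simp [ha_def, vfdIterSeq, he_def], by simp [ha_def, vfdIterSeq]⟩
    | succ n ih =>
      obtain ⟨hp, hE2, hlog⟩ := ih
      have hEpos : 0 < E (a n) := lt_of_lt_of_le (by positivity) hE2
      set t : ℝ := 4 / (C * E (a n)) with ht_def
      have ht0 : 0 < t := by positivity
      have hstep : a (n + 1) = a n * Real.exp t := rfl
      have hlt : a n < a (n + 1) := by
        rw [hstep]
        nlinarith [Real.one_lt_exp_iff.2 ht0, Real.exp_pos t]
      have hp' : 0 < a (n + 1) := hp.trans hlt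
      have hlog' : Real.log (a (n + 1)) = Real.log (a n) + t := by
        rw [hstep, Real.log_mul hp.ne' (Real.exp_pos t).ne', Real.log_exp]
      refine ⟨hp', ?_, ?_⟩
      · -- growth
        have := vfd_step C hC E hE0 hmono hderiv hp hlt
        have hEt : C * E (a n) ^ 2 / 2 * t = 2 * E (a n) := by
          rw [ht_def]; field_simp; ring
        have : E (a n) + 2 * E (a n) ≤ E (a (n + 1)) := by
          rw [← hEt]
          calc E (a n) + C * E (a n) ^ 2 / 2 * t
              = E (a n) + C * E (a n) ^ 2 / 2 * (Real.log (a (n+1)) - Real.log (a n)) := by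
                rw [hlog']; ring_nf
            _ ≤ E (a (n + 1)) := vfd_step C hC E hE0 hmono hderiv hp hlt
        have h2 : (2 : ℝ) ^ (n + 1) * e = 2 * (2 ^ n * e) := by ring
        rw [h2]
        nlinarith
      · -- log bound
        have ht_le : t ≤ K * (1/2 : ℝ) ^ (n + 1) := by
          have h1 : C * (2 ^ n * e) ≤ C * E (a n) := by nlinarith
          have h2 : t ≤ 4 / (C * (2 ^ n * e)) := by
            apply div_le_div_of_nonneg_left (by norm_num) (by positivity) h1
          have h3 : 4 / (C * (2 ^ n * e)) = K * (1/2 : ℝ) ^ (n + 1) := by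
            rw [hK_def]
            field_simp
            ring_nf
            rw [← mul_pow]; norm_num
          linarith [h3 ▸ h2]
        have : K * (1 - (1/2 : ℝ) ^ n) + K * (1/2 : ℝ) ^ (n + 1)
            = K * (1 - (1/2 : ℝ) ^ (n + 1)) := by ring
        rw [hlog']
        linarith
  -- uniform bound on the sequence
  set R : ℝ := r₀ * Real.exp K with hR_def
  have hR0 : 0 < R := by positivity
  have haR : ∀ n, a n ≤ R := by
    intro n
    obtain ⟨hp, -, hlog⟩ := key n
    have h1 : Real.log (a n) ≤ Real.log R := by
      rw [hR_def, Real.log_mul hr₀.ne' (Real.exp_pos K).ne', Real.log_exp]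
      have : K * (1 - (1/2 : ℝ) ^ n) ≤ K := by
        have : (0:ℝ) < (1/2 : ℝ) ^ n := by positivity
        nlinarith
      linarith
    calc a n = Real.exp (Real.log (a n)) := (Real.exp_log hp).symm
      _ ≤ Real.exp (Real.log R) := Real.exp_le_exp.2 h1
      _ = R := Real.exp_log hR0
  have hER : ∀ n : ℕ, 2 ^ n * e ≤ E R := by
    intro n
    obtain ⟨hp, hE2, -⟩ := key n
    exact hE2.trans (hmono hp hR0 (haR n))
  obtain ⟨n, hn⟩ := pow_unbounded_of_one_lt (E R / e) (by norm_num : (1:ℝ) < 2)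
  have : E R < 2 ^ n * e := by
    rw [div_lt_iff₀ he] at hn
    linarith
  linarith [hER n]
end

section
/- Let m ≥ 1, κ ≥ 0, let Ω ⊆ ℝ^m be an open set satisfying the measure density condition with constant c > 0, and let u ∈ L²(Ω) with [u]_{2,m,κ} ≤ S < ∞. Then there is a constant C depending only on m, c and κ such that for every x₀ ∈ Ω, every 0 < r < 1/2, and every integer k ≥ 0, setting r_k := r/2^k, one has |u_{x₀, r_k} − u_{x₀, r_{k+1}}| ≤ C · S · (k+1)^{−κ/2}. -/
open MeasureTheory Metric Filter
open scoped Topology ENNReal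

/-- `Ω` satisfies the measure density condition with constant `c`:
`|Ω ∩ B_ρ(x)| ≥ c ρ^m` for all `x ∈ Ω` and `0 < ρ < 1`. -/
def MeasureDensityCond {m : ℕ} (Ω : Set (EuclideanSpace ℝ (Fin m))) (c : ℝ) : Prop :=
  ∀ x ∈ Ω, ∀ ρ : ℝ, 0 < ρ → ρ < 1 → c * ρ ^ m ≤ (volume (Ω ∩ ball x ρ)).toReal

/-- The average `u_{x₀,ρ}` of `u` over `Ω(x₀,ρ) = Ω ∩ B_ρ(x₀)`. -/
noncomputable def locAvg {m : ℕ} (Ω : Set (EuclideanSpace ℝ (Fin m)))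
    (u : EuclideanSpace ℝ (Fin m) → ℝ) (x₀ : EuclideanSpace ℝ (Fin m)) (ρ : ℝ) : ℝ :=
  ⨍ y in Ω ∩ ball x₀ ρ, u y

/-- The generalized Campanato seminorm bound `[u]_{2,m,κ} ≤ S` (with `0 ≤ S`), written out:
`ρ^{-m} (log(1/ρ))^κ ∫_{Ω(x₀,ρ)} |u - u_{x₀,ρ}|² ≤ S²` for all `x₀ ∈ Ω`, `0 < ρ < 1/2`. -/
def CampanatoSeminormLE {m : ℕ} (Ω : Set (EuclideanSpace ℝ (Fin m)))
    (u : EuclideanSpace ℝ (Fin m) → ℝ) (κ S : ℝ) : Prop :=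
  0 ≤ S ∧ ∀ x₀ ∈ Ω, ∀ ρ : ℝ, 0 < ρ → ρ < 1/2 →
    ρ ^ (-(m : ℝ)) * (Real.log (1/ρ)) ^ κ *
      ∫ y in Ω ∩ ball x₀ ρ, (u y - locAvg Ω u x₀ ρ) ^ 2 ≤ S ^ 2

private lemma rpow_half_neg_sq {x e : ℝ} (hx : 0 ≤ x) :
    (x ^ (-(e / 2))) ^ 2 = x ^ (-e) := by
  rw [← Real.rpow_natCast (x ^ (-(e / 2))) 2, ← Real.rpow_mul hx]
  norm_num

private lemma rpow_half_sq {x : ℝ} (hx : 0 ≤ x) : (x ^ ((1 : ℝ) / 2)) ^ 2 = x := by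
  rw [← Real.rpow_natCast (x ^ ((1 : ℝ) / 2)) 2, ← Real.rpow_mul hx]
  norm_num

/-- Cauchy–Schwarz for integrals, squared form. -/
private lemma sq_integral_le {α : Type*} [MeasurableSpace α] (μ : Measure α)
    [IsFiniteMeasure μ] {f : α → ℝ} (hf : MemLp f 2 μ) :
    (∫ a, f a ∂μ) ^ 2 ≤ (μ Set.univ).toReal * ∫ a, (f a) ^ 2 ∂μ := by
  have h2 : (2 : ℝ).HolderConjugate 2 := Real.holderConjugate_iff.mpr ⟨one_lt_two, by norm_num⟩
  have hof : (ENNReal.ofReal (2 : ℝ)) = 2 := by norm_num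
  have hfa : MemLp (fun a => |f a|) (ENNReal.ofReal (2 : ℝ)) μ := by
    rw [hof]; exact hf.abs
  have hg : MemLp (fun _ : α => (1 : ℝ)) (ENNReal.ofReal (2 : ℝ)) μ := by
    rw [hof]; exact memLp_const 1
  have holder := integral_mul_le_Lp_mul_Lq_of_nonneg h2
    (Eventually.of_forall fun a => abs_nonneg (f a))
    (Eventually.of_forall fun _ => zero_le_one) hfa hg
  simp only [mul_one] at holder
  have hA : ∫ a, |f a| ^ (2 : ℝ) ∂μ = ∫ a, (f a) ^ 2 ∂μ := by
    refine integral_congr_ae (Eventually.of_forall fun a => ?_)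
    show |f a| ^ (2:ℝ) = (f a) ^ 2
    rw [Real.rpow_two, sq_abs]
  have hB : ∫ _a : α, (1 : ℝ) ^ (2 : ℝ) ∂μ = (μ Set.univ).toReal := by
    simp [Measure.real]
  rw [hA, hB] at holder
  have hAnn : 0 ≤ ∫ a, (f a) ^ 2 ∂μ :=
    integral_nonneg fun a => sq_nonneg _
  have hBnn : 0 ≤ (μ Set.univ).toReal := ENNReal.toReal_nonneg
  calc (∫ a, f a ∂μ) ^ 2 = |∫ a, f a ∂μ| ^ 2 := (sq_abs _).symm
    _ ≤ (∫ a, |f a| ∂μ) ^ 2 := by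
        apply pow_le_pow_left₀ (abs_nonneg _)
        simpa [Real.norm_eq_abs] using norm_integral_le_integral_norm (μ := μ) f
    _ ≤ ((∫ a, (f a) ^ 2 ∂μ) ^ ((1:ℝ)/2) * ((μ Set.univ).toReal) ^ ((1:ℝ)/2)) ^ 2 := by
        apply pow_le_pow_left₀ (integral_nonneg fun a => abs_nonneg _) holder
    _ = (μ Set.univ).toReal * ∫ a, (f a) ^ 2 ∂μ := by
        rw [mul_pow, rpow_half_sq hAnn, rpow_half_sq hBnn]; ring

/-- Dyadic decay of averages for functions with bounded generalized Campanato seminorm. -/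
theorem dyadic_average_decay {m : ℕ} (hm : 1 ≤ m) (κ c : ℝ) (hκ : 0 ≤ κ) (hc : 0 < c) :
    ∃ C : ℝ, 0 < C ∧
      ∀ (Ω : Set (EuclideanSpace ℝ (Fin m))), IsOpen Ω → MeasureDensityCond Ω c →
        ∀ (u : EuclideanSpace ℝ (Fin m) → ℝ), MemLp u 2 (volume.restrict Ω) →
          ∀ S : ℝ, CampanatoSeminormLE Ω u κ S →
            ∀ x₀ ∈ Ω, ∀ r : ℝ, 0 < r → r < 1/2 → ∀ k : ℕ,
              |locAvg Ω u x₀ (r / 2 ^ k) - locAvg Ω u x₀ (r / 2 ^ (k + 1))| ≤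
                C * S * ((k : ℝ) + 1) ^ (-(κ / 2)) := by
  have hlog2 : 0 < Real.log 2 := Real.log_pos one_lt_two
  set C : ℝ := Real.sqrt (2 ^ m / c) * (Real.log 2) ^ (-(κ / 2)) with hC
  have hCpos : 0 < C := by
    apply mul_pos
    · exact Real.sqrt_pos.mpr (by positivity)
    · exact Real.rpow_pos_of_pos hlog2 _
  refine ⟨C, hCpos, ?_⟩
  intro Ω hΩopen hdens u hu S hS x₀ hx₀ r hr hr2 k
  obtain ⟨hSnn, hcamp⟩ := hS
  set ρ : ℝ := r / 2 ^ k with hρdef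
  set σ : ℝ := r / 2 ^ (k + 1) with hσdef
  have hρpos : 0 < ρ := by positivity
  have hσpos : 0 < σ := by positivity
  have hσρ : σ = ρ / 2 := by
    rw [hρdef, hσdef, pow_succ]; ring
  have hρle : ρ ≤ r := by
    rw [hρdef]
    apply div_le_self hr.le
    exact one_le_pow₀ one_le_two
  have hρ2 : ρ < 1/2 := lt_of_le_of_lt hρle hr2
  have hσ1 : σ < 1 := by rw [hσρ]; linarith
  have hρ1 : ρ < 1 := by linarith
  set s : Set (EuclideanSpace ℝ (Fin m)) := Ω ∩ ball x₀ σ with hsdef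
  set t : Set (EuclideanSpace ℝ (Fin m)) := Ω ∩ ball x₀ ρ with htdef
  have hst : s ⊆ t := by
    apply Set.inter_subset_inter_right
    apply ball_subset_ball
    rw [hσρ]; linarith
  -- measure bounds
  have hμs_lb : c * σ ^ m ≤ (volume s).toReal := hdens x₀ hx₀ σ hσpos hσ1
  have hσm_pos : 0 < c * σ ^ m := by positivity
  have hμs_pos : 0 < (volume s).toReal := lt_of_lt_of_le hσm_pos hμs_lb
  have hμs_fin : volume s ≠ ⊤ :=
    (lt_of_le_of_lt (measure_mono Set.inter_subset_right) measure_ball_lt_top).ne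
  have hμt_fin : volume t ≠ ⊤ :=
    (lt_of_le_of_lt (measure_mono Set.inter_subset_right) measure_ball_lt_top).ne
  haveI hfin_s : IsFiniteMeasure (volume.restrict s) :=
    ⟨by rw [Measure.restrict_apply_univ]; exact hμs_fin.lt_top⟩
  haveI hfin_t : IsFiniteMeasure (volume.restrict t) :=
    ⟨by rw [Measure.restrict_apply_univ]; exact hμt_fin.lt_top⟩
  -- integrability
  have hut : MemLp u 2 (volume.restrict t) :=
    hu.mono_measure (Measure.restrict_mono Set.inter_subset_left le_rfl)
  have hus : MemLp u 2 (volume.restrict s) :=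
    hut.mono_measure (Measure.restrict_mono hst le_rfl)
  set a : ℝ := locAvg Ω u x₀ ρ with ha
  have hvt : MemLp (fun y => u y - a) 2 (volume.restrict t) := by
    have := hut.sub (memLp_const (μ := volume.restrict t) a)
    simpa [Pi.sub_def] using this
  have hvs : MemLp (fun y => u y - a) 2 (volume.restrict s) :=
    hvt.mono_measure (Measure.restrict_mono hst le_rfl)
  have hvt_sq_int : Integrable (fun y => (u y - a) ^ 2) (volume.restrict t) :=
    hvt.integrable_sq
  have hvs_int : Integrable (fun y => u y - a) (volume.restrict s) :=
    hvs.integrable one_le_two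
  -- diff = μs⁻¹ * ∫ s (u - a)
  have hus_int : Integrable u (volume.restrict s) := hus.integrable one_le_two
  set μs : ℝ := (volume s).toReal with hμs
  have hdiff : locAvg Ω u x₀ σ - a = μs⁻¹ * ∫ y in s, (u y - a) := by
    rw [locAvg, ← hsdef, setAverage_eq, smul_eq_mul,
      integral_sub hus_int (integrable_const a), setIntegral_const, smul_eq_mul]
    field_simp
    rw [show volume.real s = μs from rfl, sub_mul, div_mul_cancel₀ _ hμs_pos.ne']; ring
  set E : ℝ := ∫ y in s, (u y - a) with hE
  set Is : ℝ := ∫ y in s, (u y - a) ^ 2 with hIs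
  set It : ℝ := ∫ y in t, (u y - a) ^ 2 with hIt
  have hItnn : 0 ≤ It := integral_nonneg fun _ => sq_nonneg _
  have hCS : E ^ 2 ≤ μs * Is := by
    have h := sq_integral_le (volume.restrict s) hvs
    rwa [Measure.restrict_apply_univ] at h
  have hIsIt : Is ≤ It :=
    setIntegral_mono_set hvt_sq_int (Eventually.of_forall fun y => sq_nonneg _)
      (HasSubset.Subset.eventuallyLE hst)
  have hdiffsq : (locAvg Ω u x₀ σ - a) ^ 2 ≤ μs⁻¹ * It := by
    rw [hdiff, mul_pow]
    calc μs⁻¹ ^ 2 * E ^ 2 ≤ μs⁻¹ ^ 2 * (μs * It) := by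
          apply mul_le_mul_of_nonneg_left _ (sq_nonneg _)
          exact le_trans hCS (mul_le_mul_of_nonneg_left hIsIt hμs_pos.le)
      _ = (μs⁻¹ * μs) * (μs⁻¹ * It) := by ring
      _ = μs⁻¹ * It := by rw [inv_mul_cancel₀ hμs_pos.ne', one_mul]
  -- Campanato bound at radius ρ
  set L : ℝ := Real.log (1 / ρ) with hLdef
  have hL : ((k : ℝ) + 1) * Real.log 2 ≤ L := by
    have h1 : (2 : ℝ) ^ (k + 1) ≤ 1 / ρ := by
      rw [hρdef, one_div_div, pow_succ]
      have h2 : (2 : ℝ) ≤ 1 / r := by rw [le_div_iff₀ hr]; linarith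
      calc (2:ℝ) ^ k * 2 ≤ 2 ^ k * (1 / r) := by
            apply mul_le_mul_of_nonneg_left h2 (by positivity)
        _ = 2 ^ k / r := by ring
    have := Real.log_le_log (by positivity) h1
    rwa [Real.log_pow, Nat.cast_add, Nat.cast_one] at this
  have hLpos : 0 < L := lt_of_lt_of_le (by positivity) hL
  set Q : ℝ := L ^ κ with hQ
  have hQpos : 0 < Q := Real.rpow_pos_of_pos hLpos κ
  have hPpos : 0 < (ρ : ℝ) ^ m := by positivity
  have hcb : ((ρ : ℝ) ^ m)⁻¹ * Q * It ≤ S ^ 2 := by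
    have h := hcamp x₀ hx₀ ρ hρpos hρ2
    rwa [Real.rpow_neg hρpos.le, Real.rpow_natCast, ← htdef, ← ha, ← hIt, ← hLdef, ← hQ] at h
  have hIt_le : It ≤ ρ ^ m * Q⁻¹ * S ^ 2 := by
    have h1 : It = (ρ ^ m * Q⁻¹) * (((ρ : ℝ) ^ m)⁻¹ * Q * It) := by
      field_simp
    rw [h1]
    calc (ρ ^ m * Q⁻¹) * (((ρ : ℝ) ^ m)⁻¹ * Q * It)
        ≤ (ρ ^ m * Q⁻¹) * S ^ 2 := by
          apply mul_le_mul_of_nonneg_left hcb (by positivity)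
      _ = ρ ^ m * Q⁻¹ * S ^ 2 := by ring
  -- combine
  have hμsinv : μs⁻¹ ≤ (c * σ ^ m)⁻¹ := by
    apply inv_anti₀ hσm_pos hμs_lb
  have hmain : (locAvg Ω u x₀ σ - a) ^ 2 ≤ (2 ^ m / c) * S ^ 2 * Q⁻¹ := by
    calc (locAvg Ω u x₀ σ - a) ^ 2 ≤ μs⁻¹ * It := hdiffsq
      _ ≤ (c * σ ^ m)⁻¹ * (ρ ^ m * Q⁻¹ * S ^ 2) :=
          mul_le_mul hμsinv hIt_le hItnn (by positivity)
      _ = (2 ^ m / c) * S ^ 2 * Q⁻¹ := by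
          have hρσ : ρ = 2 * σ := by rw [hσρ]; ring
          rw [hρσ, mul_pow]
          field_simp
  -- pass to the stated bound
  have hQ' : Q⁻¹ ≤ ((k : ℝ) + 1) ^ (-κ) * (Real.log 2) ^ (-κ) := by
    have h1 : L ^ (-κ) ≤ (((k : ℝ) + 1) * Real.log 2) ^ (-κ) :=
      Real.rpow_le_rpow_of_nonpos (by positivity) hL (neg_nonpos.mpr hκ)
    have h2 : Q⁻¹ = L ^ (-κ) := by
      rw [hQ, Real.rpow_neg hLpos.le]
    rw [h2, ← Real.mul_rpow (by positivity) hlog2.le]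
    exact h1
  have hfinal : (locAvg Ω u x₀ σ - a) ^ 2 ≤
      (C * S * ((k : ℝ) + 1) ^ (-(κ / 2))) ^ 2 := by
    have hRHS : (C * S * ((k : ℝ) + 1) ^ (-(κ / 2))) ^ 2 =
        (2 ^ m / c) * (Real.log 2) ^ (-κ) * S ^ 2 * ((k : ℝ) + 1) ^ (-κ) := by
      rw [mul_pow, mul_pow, hC, mul_pow, Real.sq_sqrt (by positivity),
        rpow_half_neg_sq hlog2.le, rpow_half_neg_sq (by positivity : (0:ℝ) ≤ (k:ℝ) + 1)]
      try ring
    rw [hRHS]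
    calc (locAvg Ω u x₀ σ - a) ^ 2 ≤ (2 ^ m / c) * S ^ 2 * Q⁻¹ := hmain
      _ ≤ (2 ^ m / c) * S ^ 2 * (((k : ℝ) + 1) ^ (-κ) * (Real.log 2) ^ (-κ)) := by
          apply mul_le_mul_of_nonneg_left hQ' (by positivity)
      _ = (2 ^ m / c) * (Real.log 2) ^ (-κ) * S ^ 2 * ((k : ℝ) + 1) ^ (-κ) := by ring
  have hRHSnn : 0 ≤ C * S * ((k : ℝ) + 1) ^ (-(κ / 2)) := by positivity
  have : |locAvg Ω u x₀ σ - a| ≤ C * S * ((k : ℝ) + 1) ^ (-(κ / 2)) := by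
    rw [← Real.sqrt_sq_eq_abs, ← Real.sqrt_sq hRHSnn]
    exact Real.sqrt_le_sqrt hfinal
  rw [abs_sub_comm]
  exact this
end

section
/- Let m ≥ 1, κ > 2, let Ω ⊆ ℝ^m be an open set satisfying the measure density condition with constant c > 0, and let u ∈ L²(Ω) with [u]_{2,m,κ} ≤ S < ∞. Then there is a constant C depending only on m, c and κ such that for every x₀ ∈ Ω, every 0 < r < 1/2, and all integers 0 ≤ k < h, setting r_j := r/2^j, one has |u_{x₀, r_k} − u_{x₀, r_h}| ≤ C · S · (k+1)^{1−κ/2}; in particular the sequence (u_{x₀, r_k})_{k} is a Cauchy sequence. -/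
open MeasureTheory Metric Filter
open scoped Topology ENNReal

lemma sum_pow_neg_le {p : ℝ} (hp : 1 < p) (k h : ℕ) (hkh : k < h) :
    ∑ j ∈ Finset.Ico k h, ((j:ℝ)+1) ^ (-p) ≤ (1 + (p-1)⁻¹) * (((k:ℝ)+1) ^ (1-p)) := by
  have hp0 : 0 < p - 1 := by linarith
  have hk1 : (1:ℝ) ≤ (k:ℝ)+1 := by
    have := Nat.cast_nonneg (α := ℝ) k; linarith
  have hh1 : (1:ℝ) ≤ (h:ℝ) := by
    have : 1 ≤ h := by omega
    exact_mod_cast this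
  rw [Finset.sum_eq_sum_Ico_succ_bot hkh]
  have hkk : (0:ℝ) < ((k:ℝ)+1) := by linarith
  have anti : AntitoneOn (fun x:ℝ => x ^ (-p)) (Set.Icc ((k+1:ℕ):ℝ) (h:ℝ)) := by
    intro a ha b hb hab
    have ha0 : (0:ℝ) < a := by
      have := ha.1; push_cast at this; linarith
    exact Real.rpow_le_rpow_of_nonpos ha0 hab (by linarith)
  have key := anti.sum_le_integral_Ico hkh
  have hint : ∫ x in ((k+1:ℕ):ℝ)..(h:ℝ), x ^ (-p) =
      ((h:ℝ) ^ (-p+1) - ((k+1:ℕ):ℝ) ^ (-p+1)) / (-p+1) := by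
    apply integral_rpow
    right
    refine ⟨by intro hc; simp only [neg_inj] at hc; linarith, ?_⟩
    intro hc
    rw [Set.mem_uIcc] at hc
    rcases hc with ⟨h1, _⟩ | ⟨h2, _⟩
    · push_cast at h1; linarith
    · linarith
  have hhp : (h:ℝ) ^ (-p+1) ≥ 0 := Real.rpow_nonneg (by linarith) _
  have hkp : ((k+1:ℕ):ℝ) ^ (-p+1) = ((k:ℝ)+1) ^ (1-p) := by
    push_cast; ring_nf
  have hbound : ∫ x in ((k+1:ℕ):ℝ)..(h:ℝ), x ^ (-p) ≤ (p-1)⁻¹ * ((k:ℝ)+1) ^ (1-p) := by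
    rw [hint, hkp]
    rw [div_le_iff_of_neg (by linarith : -p+1 < 0)]
    have hk1p : (0:ℝ) ≤ ((k:ℝ)+1) ^ (1-p) := Real.rpow_nonneg (by linarith) _
    have : (p-1)⁻¹ * (((k:ℝ)+1) ^ (1-p)) * (-p+1) = -((k:ℝ)+1) ^ (1-p) := by
      field_simp; ring
    rw [this]
    linarith
  have hfirst : ((k:ℝ)+1) ^ (-p) ≤ ((k:ℝ)+1) ^ (1-p) :=
    Real.rpow_le_rpow_of_exponent_le hk1 (by linarith)
  have hsum2 : ∑ i ∈ Finset.Ico (k+1) h, ((i:ℝ)+1) ^ (-p) ≤ (p-1)⁻¹ * ((k:ℝ)+1) ^ (1-p) := by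
    calc ∑ i ∈ Finset.Ico (k+1) h, ((i:ℝ)+1) ^ (-p)
        = ∑ i ∈ Finset.Ico (k+1) h, (fun x:ℝ => x ^ (-p)) ((i+1:ℕ):ℝ) := by
          apply Finset.sum_congr rfl; intro i _; push_cast; ring_nf
      _ ≤ ∫ x in ((k+1:ℕ):ℝ)..(h:ℝ), x ^ (-p) := key
      _ ≤ (p-1)⁻¹ * ((k:ℝ)+1) ^ (1-p) := hbound
  have := add_le_add hfirst hsum2
  calc ((k:ℝ)+1) ^ (-p) + ∑ i ∈ Finset.Ico (k+1) h, ((i:ℝ)+1) ^ (-p)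
      ≤ ((k:ℝ)+1) ^ (1-p) + (p-1)⁻¹ * ((k:ℝ)+1) ^ (1-p) := this
    _ = (1 + (p-1)⁻¹) * (((k:ℝ)+1) ^ (1-p)) := by ring
lemma step_bound {m : ℕ} {κ c : ℝ} (hκ : 2 < κ) (hc : 0 < c)
    {Ω : Set (EuclideanSpace ℝ (Fin m))} (hΩ : IsOpen Ω) (hd : MeasureDensityCond Ω c)
    {u : EuclideanSpace ℝ (Fin m) → ℝ} (hu : MemLp u 2 (volume.restrict Ω))
    {S : ℝ} (hS : CampanatoSeminormLE Ω u κ S)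
    {x₀ : EuclideanSpace ℝ (Fin m)} (hx₀ : x₀ ∈ Ω)
    {ρ : ℝ} (hρ0 : 0 < ρ) (hρ2 : ρ < 1/2) :
    |locAvg Ω u x₀ (ρ/2) - locAvg Ω u x₀ ρ| ≤
      Real.sqrt (2^m / c) * S * (Real.log (1/ρ)) ^ (-(κ/2)) := by
  obtain ⟨hS0, hcamp⟩ := hS
  have hρ1 : ρ < 1 := by linarith
  have hρ'0 : 0 < ρ/2 := by linarith
  set A := Ω ∩ ball x₀ ρ with hA
  set A' := Ω ∩ ball x₀ (ρ/2) with hA'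
  set a := locAvg Ω u x₀ ρ with ha
  set L := Real.log (1/ρ) with hLdef
  have hL : 0 < L := Real.log_pos ((one_lt_div hρ0).mpr hρ1)
  have hmA : MeasurableSet A := (hΩ.inter isOpen_ball).measurableSet
  have hmA' : MeasurableSet A' := (hΩ.inter isOpen_ball).measurableSet
  have hdens := hd x₀ hx₀ (ρ/2) hρ'0 (by linarith)
  have hposA' : (0:ℝ) < (volume A').toReal := lt_of_lt_of_le (by positivity) hdens
  have hfinA' : volume A' < ⊤ :=
    lt_of_le_of_lt (measure_mono Set.inter_subset_right) measure_ball_lt_top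
  have hfinA : volume A < ⊤ :=
    lt_of_le_of_lt (measure_mono Set.inter_subset_right) measure_ball_lt_top
  have hneA' : volume A' ≠ 0 := by
    intro h0; rw [h0] at hposA'; simp at hposA'
  haveI : IsFiniteMeasure (volume.restrict A') := ⟨by rwa [Measure.restrict_apply_univ]⟩
  haveI : IsFiniteMeasure (volume.restrict A) := ⟨by rwa [Measure.restrict_apply_univ]⟩
  haveI : NeZero (volume.restrict A') := ⟨by rwa [Ne, Measure.restrict_eq_zero]⟩
  -- integrability
  have hmemA : MemLp u 2 (volume.restrict A) := by
    rw [hA, Set.inter_comm, ← Measure.restrict_restrict measurableSet_ball]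
    exact hu.restrict _
  have hmemA' : MemLp u 2 (volume.restrict A') := by
    rw [hA', Set.inter_comm, ← Measure.restrict_restrict measurableSet_ball]
    exact hu.restrict _
  have hmemA'2 : MemLp (fun y => u y - a) 2 (volume.restrict A') :=
    hmemA'.sub (memLp_const a)
  have hmemA2 : MemLp (fun y => u y - a) 2 (volume.restrict A) :=
    hmemA.sub (memLp_const a)
  have hfiu' : Integrable u (volume.restrict A') := hmemA'.integrable one_le_two
  have hfi' : Integrable (fun y => u y - a) (volume.restrict A') :=
    hmemA'2.integrable one_le_two
  have hgi' : Integrable (fun y => (u y - a)^2) (volume.restrict A') := hmemA'2.integrable_sq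
  have hgi : Integrable (fun y => (u y - a)^2) (volume.restrict A) := hmemA2.integrable_sq
  -- average of difference
  have havg : ⨍ y in A', (u y - a) = locAvg Ω u x₀ (ρ/2) - a := by
    rw [setAverage_eq, integral_sub hfiu' (integrable_const a), setIntegral_const,
      smul_eq_mul, smul_eq_mul, mul_sub, locAvg, setAverage_eq, smul_eq_mul, ← hA']
    congr 1
    field_simp
    exact mul_div_cancel_left₀ a hposA'.ne'
  -- Jensen
  have jensen : (⨍ y in A', (u y - a)) ^ 2 ≤ ⨍ y in A', (u y - a)^2 := by
    have hconv : ConvexOn ℝ Set.univ (fun x : ℝ => x ^ 2) := Even.convexOn_pow even_two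
    exact hconv.map_average_le (continuous_pow 2).continuousOn isClosed_univ
      (Filter.Eventually.of_forall fun x => Set.mem_univ _) hfi' hgi'
  -- Campanato bound
  have hI := hcamp x₀ hx₀ ρ hρ0 hρ2
  set I := ∫ y in A, (u y - a)^2 with hIdef
  have hInn : 0 ≤ I := setIntegral_nonneg hmA fun y _ => sq_nonneg _
  have hrw : ρ ^ (-(m:ℝ)) = (ρ^m)⁻¹ := by
    rw [Real.rpow_neg hρ0.le, Real.rpow_natCast]
  have hρm : (0:ℝ) < ρ^m := pow_pos hρ0 m
  have hLκ : (0:ℝ) < L^κ := Real.rpow_pos_of_pos hL κ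
  have hIle : I ≤ S^2 * ρ^m * L ^ (-κ) := by
    rw [hrw] at hI
    rw [Real.rpow_neg hL.le]
    calc I = ρ^m * (L^κ)⁻¹ * ((ρ^m)⁻¹ * L^κ * I) := by field_simp
      _ ≤ ρ^m * (L^κ)⁻¹ * S^2 :=
          mul_le_mul_of_nonneg_left hI (by positivity)
      _ = S^2 * ρ^m * (L^κ)⁻¹ := by ring
  -- main chain
  set d := locAvg Ω u x₀ (ρ/2) - a with hdd
  have hsub : A' ⊆ A := Set.inter_subset_inter_right _ (ball_subset_ball (by linarith))
  have hd2 : d^2 ≤ (volume A').toReal⁻¹ * I := by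
    calc d^2 = (⨍ y in A', (u y - a))^2 := by rw [havg]
      _ ≤ ⨍ y in A', (u y - a)^2 := jensen
      _ = (volume A').toReal⁻¹ * ∫ y in A', (u y - a)^2 := by
          rw [setAverage_eq, smul_eq_mul]; rfl
      _ ≤ (volume A').toReal⁻¹ * I := by
          apply mul_le_mul_of_nonneg_left _ (by positivity)
          exact setIntegral_mono_set hgi
            (Filter.Eventually.of_forall fun y => sq_nonneg _)
            (HasSubset.Subset.eventuallyLE hsub)
  have hinv : (volume A').toReal⁻¹ ≤ (c * (ρ/2)^m)⁻¹ :=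
    inv_anti₀ (by positivity) hdens
  have hd2' : d^2 ≤ (2^m/c) * S^2 * L^(-κ) := by
    have h1 : (volume A').toReal⁻¹ * I ≤ (c * (ρ/2)^m)⁻¹ * (S^2 * ρ^m * L^(-κ)) :=
      mul_le_mul hinv hIle hInn (by positivity)
    have h2 : (c * (ρ/2)^m)⁻¹ * (S^2 * ρ^m * L^(-κ)) = (2^m/c) * S^2 * L^(-κ) := by
      rw [div_pow]
      field_simp
    linarith
  have hE : (0:ℝ) ≤ Real.sqrt (2^m/c) * S * L^(-(κ/2)) := by positivity
  have hEsq : (Real.sqrt (2^m/c) * S * L^(-(κ/2)))^2 = (2^m/c) * S^2 * L^(-κ) := by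
    rw [mul_pow, mul_pow, Real.sq_sqrt (by positivity : (0:ℝ) ≤ 2^m/c)]
    congr 1
    rw [← Real.rpow_natCast (L^(-(κ/2))) 2, ← Real.rpow_mul hL.le]
    norm_num
  calc |d| = Real.sqrt (d^2) := (Real.sqrt_sq_eq_abs d).symm
    _ ≤ Real.sqrt ((Real.sqrt (2^m/c) * S * L^(-(κ/2)))^2) :=
        Real.sqrt_le_sqrt (by rw [hEsq]; linarith)
    _ = Real.sqrt (2^m/c) * S * L^(-(κ/2)) := Real.sqrt_sq hE

/-- Dyadic averages form a Cauchy sequence: for `κ > 2`,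
`|u_{x₀,r_k} - u_{x₀,r_h}| ≤ C S (k+1)^{1-κ/2}` for `k < h`. -/
theorem dyadic_averages_cauchy {m : ℕ} (hm : 1 ≤ m) (κ c : ℝ) (hκ : 2 < κ) (hc : 0 < c) :
    ∃ C : ℝ, 0 < C ∧
      ∀ (Ω : Set (EuclideanSpace ℝ (Fin m))), IsOpen Ω → MeasureDensityCond Ω c →
        ∀ (u : EuclideanSpace ℝ (Fin m) → ℝ), MemLp u 2 (volume.restrict Ω) →
          ∀ S : ℝ, CampanatoSeminormLE Ω u κ S →
            ∀ x₀ ∈ Ω, ∀ r : ℝ, 0 < r → r < 1/2 →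
              (∀ k h : ℕ, k < h →
                |locAvg Ω u x₀ (r / 2 ^ k) - locAvg Ω u x₀ (r / 2 ^ h)| ≤
                  C * S * ((k : ℝ) + 1) ^ (1 - κ / 2)) ∧
              CauchySeq (fun k : ℕ => locAvg Ω u x₀ (r / 2 ^ k)) := by
  have hlog2 : (0:ℝ) < Real.log 2 := Real.log_pos one_lt_two
  set D : ℝ := Real.sqrt (2^m / c) * (Real.log 2) ^ (-(κ/2)) with hDdef
  have hD : 0 < D := mul_pos (Real.sqrt_pos.mpr (by positivity))
    (Real.rpow_pos_of_pos hlog2 _)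
  set K : ℝ := 1 + (κ/2 - 1)⁻¹ with hKdef
  have hK : 0 < K := by
    have h0 : (0:ℝ) < (κ/2 - 1)⁻¹ := by
      apply inv_pos.mpr; linarith
    rw [hKdef]; linarith
  refine ⟨D * K, mul_pos hD hK, ?_⟩
  intro Ω hΩ hd u hu S hS x₀ hx₀ r hr0 hr2
  have hS0 := hS.1
  have hDS : 0 ≤ D * S := mul_nonneg hD.le hS0
  -- the one-step estimate
  have hstep : ∀ j : ℕ, |locAvg Ω u x₀ (r/2^(j+1)) - locAvg Ω u x₀ (r/2^j)| ≤
      D * S * ((j:ℝ)+1) ^ (-(κ/2)) := by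
    intro j
    have h2j : (0:ℝ) < 2^j := by positivity
    have hρ0 : 0 < r/2^j := by positivity
    have hρ2 : r/2^j < 1/2 :=
      lt_of_le_of_lt (div_le_self hr0.le (one_le_pow₀ one_le_two)) hr2
    have key := step_bound hκ hc hΩ hd hu ⟨hS0, hS.2⟩ hx₀ hρ0 hρ2
    have hhalf : r/2^(j+1) = (r/2^j)/2 := by rw [pow_succ]; ring
    rw [hhalf]
    refine key.trans ?_
    have hjl : (0:ℝ) < ((j:ℝ)+1) * Real.log 2 := by positivity
    have h2r : (2:ℝ) ≤ 1/r := by rw [le_div_iff₀ hr0]; linarith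
    have h1 : (2:ℝ)^(j+1) ≤ 1/(r/2^j) := by
      calc (2:ℝ)^(j+1) = 2^j * 2 := by rw [pow_succ]
        _ ≤ 2^j * (1/r) := mul_le_mul_of_nonneg_left h2r h2j.le
        _ = 1/(r/2^j) := by field_simp
    have hLge : ((j:ℝ)+1) * Real.log 2 ≤ Real.log (1/(r/2^j)) := by
      calc ((j:ℝ)+1) * Real.log 2 = Real.log ((2:ℝ)^(j+1)) := by
            rw [Real.log_pow]; push_cast; ring
        _ ≤ Real.log (1/(r/2^j)) := Real.log_le_log (by positivity) h1
    have hmono : (Real.log (1/(r/2^j)))^(-(κ/2)) ≤ (((j:ℝ)+1) * Real.log 2)^(-(κ/2)) :=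
      Real.rpow_le_rpow_of_nonpos hjl hLge (by linarith)
    have hsplit : (((j:ℝ)+1) * Real.log 2)^(-(κ/2)) =
        ((j:ℝ)+1)^(-(κ/2)) * (Real.log 2)^(-(κ/2)) :=
      Real.mul_rpow (by positivity) hlog2.le
    calc Real.sqrt (2^m / c) * S * (Real.log (1/(r/2^j)))^(-(κ/2))
        ≤ Real.sqrt (2^m / c) * S * (((j:ℝ)+1) * Real.log 2)^(-(κ/2)) :=
          mul_le_mul_of_nonneg_left hmono (by positivity)
      _ = D * S * ((j:ℝ)+1)^(-(κ/2)) := by rw [hsplit, hDdef]; ring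
  -- the dyadic bound
  have hb : ∀ k h : ℕ, k < h →
      |locAvg Ω u x₀ (r / 2 ^ k) - locAvg Ω u x₀ (r / 2 ^ h)| ≤
        D * K * S * ((k : ℝ) + 1) ^ (1 - κ / 2) := by
    intro k h hkh
    calc |locAvg Ω u x₀ (r / 2 ^ k) - locAvg Ω u x₀ (r / 2 ^ h)|
        = dist (locAvg Ω u x₀ (r / 2 ^ k)) (locAvg Ω u x₀ (r / 2 ^ h)) :=
          (Real.dist_eq _ _).symm
      _ ≤ ∑ j ∈ Finset.Ico k h,
            dist (locAvg Ω u x₀ (r / 2 ^ j)) (locAvg Ω u x₀ (r / 2 ^ (j+1))) :=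
          dist_le_Ico_sum_dist (fun j => locAvg Ω u x₀ (r / 2 ^ j)) hkh.le
      _ ≤ ∑ j ∈ Finset.Ico k h, D * S * ((j:ℝ)+1) ^ (-(κ/2)) := by
          apply Finset.sum_le_sum
          intro j _
          rw [Real.dist_eq, abs_sub_comm]
          exact hstep j
      _ = D * S * ∑ j ∈ Finset.Ico k h, ((j:ℝ)+1) ^ (-(κ/2)) := by
          rw [Finset.mul_sum]
      _ ≤ D * S * ((1 + (κ/2 - 1)⁻¹) * ((k:ℝ)+1) ^ (1 - κ/2)) :=
          mul_le_mul_of_nonneg_left (sum_pow_neg_le (by linarith) k h hkh) hDS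
      _ = D * K * S * ((k : ℝ) + 1) ^ (1 - κ / 2) := by rw [hKdef]; ring
  refine ⟨hb, ?_⟩
  -- Cauchy sequence
  have hCS : 0 ≤ D * K * S := mul_nonneg (mul_pos hD hK).le hS0
  apply cauchySeq_of_le_tendsto_0 (fun N : ℕ => D * K * S * ((N:ℝ)+1) ^ (1 - κ/2))
  · intro n m' N hn hm'
    have hbnd : ∀ n m' : ℕ, N ≤ n → n < m' →
        dist (locAvg Ω u x₀ (r / 2 ^ n)) (locAvg Ω u x₀ (r / 2 ^ m')) ≤
          D * K * S * ((N:ℝ)+1) ^ (1 - κ/2) := by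
      intro n m' hn hnm
      rw [Real.dist_eq]
      refine (hb n m' hnm).trans ?_
      apply mul_le_mul_of_nonneg_left _ hCS
      apply Real.rpow_le_rpow_of_nonpos (by positivity) (by exact_mod_cast by omega) (by linarith)
    rcases lt_trichotomy n m' with h | h | h
    · exact hbnd n m' hn h
    · subst h; simp only [dist_self]
      positivity
    · rw [dist_comm]; exact hbnd m' n hm' h
  · have h1 : Tendsto (fun N : ℕ => ((N:ℝ)+1)) atTop atTop :=
      tendsto_atTop_add_const_right _ 1 tendsto_natCast_atTop_atTop
    have h2 := (tendsto_rpow_neg_atTop (by linarith : (0:ℝ) < κ/2 - 1)).comp h1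
    have h3 : Tendsto (fun N : ℕ => ((N:ℝ)+1) ^ (1 - κ/2)) atTop (𝓝 0) := by
      have he : (1 - κ/2) = -(κ/2 - 1) := by ring
      rw [he]
      exact h2
    have := h3.const_mul (D * K * S)
    simpa using this
end

section
/- Let m ≥ 1, κ > 2, let Ω ⊆ ℝ^m be an open set satisfying the measure density condition with constant c > 0, and let u ∈ L²(Ω) with [u]_{2,m,κ} ≤ S < ∞. Then for every x₀ ∈ Ω the limit ũ(x₀) := lim_{ρ→0⁺} u_{x₀,ρ} exists; the function ũ agrees with u almost everywhere on Ω; and there is a constant C depending only on m, c and κ such that |u_{x₀,r} − ũ(x₀)| ≤ C · S · (log(1/r))^{−(κ/2 − 1)} for every x₀ ∈ Ω and every 0 < r < 1/2. -/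
open MeasureTheory Metric Filter
open scoped Topology ENNReal

/-! ### Auxiliary elementary lemmas -/

lemma Camp.rpow_anti {x y q : ℝ} (hx : 0 < x) (hxy : x ≤ y) (hq : 0 ≤ q) :
    y ^ (-q) ≤ x ^ (-q) := by
  rw [Real.rpow_neg hx.le, Real.rpow_neg (hx.trans_le hxy).le]
  exact inv_anti₀ (Real.rpow_pos_of_pos hx q) (Real.rpow_le_rpow hx.le hxy hq)

lemma Camp.slope_bound {p L a : ℝ} (hp : 1 < p) (hL : 0 < L) (ha : 0 < a) :
    (p - 1) * L * (a + L) ^ (-p) ≤ a ^ (-(p-1)) - (a + L) ^ (-(p-1)) := by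
  have hab : a < a + L := by linarith
  have hcont : ContinuousOn (fun x : ℝ => x ^ (-(p-1))) (Set.Icc a (a+L)) := by
    intro x hx
    exact (Real.continuousAt_rpow_const x _ (Or.inl (by nlinarith [hx.1]))).continuousWithinAt
  have hderiv : ∀ x ∈ Set.Ioo a (a+L),
      HasDerivAt (fun x : ℝ => x ^ (-(p-1))) (-(p-1) * x ^ (-(p-1) - 1)) x := by
    intro x hx
    exact Real.hasDerivAt_rpow_const (Or.inl (by nlinarith [hx.1]))
  obtain ⟨ξ, hξ, heq⟩ := exists_hasDerivAt_eq_slope _ _ hab hcont hderiv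
  have hξpos : 0 < ξ := lt_trans ha hξ.1
  have h1 : (a+L) ^ (-p) ≤ ξ ^ (-p) := Camp.rpow_anti hξpos hξ.2.le (by linarith)
  have he1 : -(p-1) = 1 - p := by ring
  have heq2 : a ^ (-(p-1)) - (a+L) ^ (-(p-1)) = (p-1) * ξ ^ (-p) * L := by
    have hupos : (0:ℝ) < a + L - a := by linarith
    field_simp at heq
    rw [show -(p-1) - 1 = -p by ring, show a + L - a = L by ring, he1] at heq
    rw [he1]
    linarith [heq]
  rw [heq2]
  nlinarith [mul_le_mul_of_nonneg_left h1 (by linarith : (0:ℝ) ≤ p - 1)]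

lemma Camp.sum_rpow_bound {p A : ℝ} (hp : 1 < p) (hA : Real.log 2 ≤ A) (n : ℕ) :
    ∑ k ∈ Finset.range (n+1), (A + k * Real.log 2) ^ (-p) ≤
      ((1 + 1/(p-1)) / Real.log 2) * A ^ (-(p-1)) := by
  have hL : 0 < Real.log 2 := Real.log_pos one_lt_two
  have hApos : 0 < A := lt_of_lt_of_le hL hA
  set L := Real.log 2 with hLdef
  set g : ℕ → ℝ := fun k => (A + k * L) ^ (-(p-1)) with hg
  have key : ∀ k : ℕ, (A + ((k+1 : ℕ) : ℝ) * L) ^ (-p) ≤ (g k - g (k+1))/((p-1) * L) := by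
    intro k
    have ha : 0 < A + k * L := by positivity
    have h := Camp.slope_bound hp hL ha
    have hb : A + ↑k * L + L = A + ((k+1:ℕ) : ℝ) * L := by push_cast; ring
    rw [hb] at h
    rw [le_div_iff₀ (mul_pos (by linarith) hL)]
    simp only [hg]
    push_cast at h ⊢
    nlinarith [h]
  have tail : ∑ k ∈ Finset.range n, (A + ((k+1:ℕ) : ℝ) * L) ^ (-p)
      ≤ A ^ (-(p-1)) / ((p-1) * L) := by
    calc ∑ k ∈ Finset.range n, (A + ((k+1:ℕ):ℝ) * L) ^ (-p)
        ≤ ∑ k ∈ Finset.range n, (g k - g (k+1))/((p-1) * L) :=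
          Finset.sum_le_sum fun k _ => key k
      _ = (g 0 - g n) / ((p-1)*L) := by
          rw [← Finset.sum_div, Finset.sum_range_sub' g]
      _ ≤ A ^ (-(p-1)) / ((p-1)*L) := by
          have h0 : g 0 = A ^ (-(p-1)) := by simp [hg]
          have hn : 0 ≤ g n := Real.rpow_nonneg (by positivity) _
          have hpos : 0 < (p-1)*L := mul_pos (by linarith) hL
          exact (div_le_div_iff_of_pos_right hpos).mpr (by linarith)
  have head : (A + ((0:ℕ):ℝ) * L) ^ (-p) ≤ A ^ (-(p-1)) / L := by
    simp only [Nat.cast_zero, zero_mul, add_zero]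
    rw [show -p = -(p-1) + (-1) by ring, Real.rpow_add hApos, Real.rpow_neg_one]
    rw [div_eq_mul_inv]
    exact mul_le_mul_of_nonneg_left (inv_anti₀ hL hA) (Real.rpow_nonneg hApos.le _)
  have hsplit := Finset.sum_range_succ' (fun k : ℕ => (A + (k:ℝ) * L) ^ (-p)) n
  have heq : A ^ (-(p-1)) / ((p-1)*L) + A ^ (-(p-1)) / L
      = ((1 + 1/(p-1)) / L) * A ^ (-(p-1)) := by
    have h1 : p - 1 ≠ 0 := by linarith
    have h2 : L ≠ 0 := ne_of_gt hL
    field_simp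
    ring
  calc ∑ k ∈ Finset.range (n+1), (A + k * L) ^ (-p)
      = (∑ k ∈ Finset.range n, (A + ((k+1:ℕ):ℝ) * L) ^ (-p))
        + (A + ((0:ℕ):ℝ) * L) ^ (-p) := by exact_mod_cast hsplit
    _ ≤ A ^ (-(p-1)) / ((p-1)*L) + A ^ (-(p-1)) / L := add_le_add tail head
    _ = ((1 + 1/(p-1)) / L) * A ^ (-(p-1)) := heq

/-! ### Measure-theoretic lemmas -/

section onestep
variable {m : ℕ} {Ω : Set (EuclideanSpace ℝ (Fin m))} {c κ S : ℝ}
  {u : EuclideanSpace ℝ (Fin m) → ℝ}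

lemma Camp.memLp_inter (hΩ : MeasurableSet Ω) (hu : MemLp u 2 (volume.restrict Ω))
    (x₀ : EuclideanSpace ℝ (Fin m)) (ρ : ℝ) :
    MemLp u 2 (volume.restrict (Ω ∩ ball x₀ ρ)) := by
  have h := hu.restrict (ball x₀ ρ)
  rwa [Measure.restrict_restrict measurableSet_ball, Set.inter_comm] at h

lemma Camp.vol_lt_top (Ω : Set (EuclideanSpace ℝ (Fin m)))
    (x₀ : EuclideanSpace ℝ (Fin m)) (ρ : ℝ) :
    volume (Ω ∩ ball x₀ ρ) < ⊤ :=
  lt_of_le_of_lt (measure_mono Set.inter_subset_right) measure_ball_lt_top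

lemma Camp.vol_toReal_pos (hc : 0 < c) (hmd : MeasureDensityCond Ω c)
    {x₀ : EuclideanSpace ℝ (Fin m)} (hx : x₀ ∈ Ω) {ρ : ℝ} (h0 : 0 < ρ) (h1 : ρ < 1) :
    0 < (volume (Ω ∩ ball x₀ ρ)).toReal :=
  lt_of_lt_of_le (by positivity) (hmd x₀ hx ρ h0 h1)

/-- One-step comparison of averages. -/
lemma Camp.onestep (hκ : 2 < κ) (hc : 0 < c) (hΩ : MeasurableSet Ω)
    (hmd : MeasureDensityCond Ω c) (hu : MemLp u 2 (volume.restrict Ω))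
    (hS : CampanatoSeminormLE Ω u κ S)
    {x₀ : EuclideanSpace ℝ (Fin m)} (hx : x₀ ∈ Ω) {σ ρ : ℝ}
    (h0 : 0 < σ) (hσρ : σ ≤ ρ) (hρ : ρ < 1/2) (hhalf : ρ ≤ 2*σ) :
    |locAvg Ω u x₀ σ - locAvg Ω u x₀ ρ| ≤
      Real.sqrt (2^m/c) * S * Real.log (1/ρ) ^ (-(κ/2)) := by
  have hρ0 : 0 < ρ := lt_of_lt_of_le h0 hσρ
  have hσ1 : σ < 1 := by linarith
  have hρ1 : ρ < 1 := by linarith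
  have hVpos : 0 < (volume (Ω ∩ ball x₀ σ)).toReal := Camp.vol_toReal_pos hc hmd hx h0 hσ1
  have hVlt : volume (Ω ∩ ball x₀ σ) < ⊤ := Camp.vol_lt_top Ω x₀ σ
  haveI : IsFiniteMeasure (volume.restrict (Ω ∩ ball x₀ σ)) :=
    ⟨by rwa [Measure.restrict_apply_univ]⟩
  haveI : NeZero (volume.restrict (Ω ∩ ball x₀ σ)) := ⟨by
    intro h
    rw [Measure.restrict_eq_zero] at h
    rw [h] at hVpos
    simp at hVpos⟩
  haveI : IsFiniteMeasure (volume.restrict (Ω ∩ ball x₀ ρ)) :=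
    ⟨by rw [Measure.restrict_apply_univ]; exact (Camp.vol_lt_top Ω x₀ ρ)⟩
  set a := locAvg Ω u x₀ ρ with ha
  have hIu : IntegrableOn u (Ω ∩ ball x₀ σ) volume :=
    (Camp.memLp_inter hΩ hu x₀ σ).integrable one_le_two
  have hmem : MemLp (fun y => u y - a) 2 (volume.restrict (Ω ∩ ball x₀ σ)) :=
    (Camp.memLp_inter hΩ hu x₀ σ).sub (memLp_const a)
  have hfi : Integrable (fun y => u y - a) (volume.restrict (Ω ∩ ball x₀ σ)) :=
    hmem.integrable one_le_two
  have hgi : Integrable (fun y => (u y - a) ^ 2) (volume.restrict (Ω ∩ ball x₀ σ)) :=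
    hmem.integrable_sq
  -- step 1: locAvg σ - a = ⨍ (u - a)
  have step1 : locAvg Ω u x₀ σ - a = ⨍ y in Ω ∩ ball x₀ σ, (u y - a) := by
    rw [locAvg, setAverage_eq, setAverage_eq, smul_eq_mul, smul_eq_mul,
      integral_sub hIu (integrable_const a), setIntegral_const, smul_eq_mul]
    have hVne : (volume (Ω ∩ ball x₀ σ)).toReal ≠ 0 := ne_of_gt hVpos
    have hVne' : volume.real (Ω ∩ ball x₀ σ) ≠ 0 := hVne
    field_simp
  -- step 2: Jensen
  have jensen : (⨍ y in Ω ∩ ball x₀ σ, (u y - a)) ^ 2 ≤ ⨍ y in Ω ∩ ball x₀ σ, (u y - a) ^ 2 := by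
    have := (Even.convexOn_pow (even_two)).map_average_le (s := Set.univ)
      (continuous_pow 2).continuousOn isClosed_univ
      (Filter.Eventually.of_forall fun x => Set.mem_univ _) hfi hgi
    simpa using this
  -- step 3: set monotonicity
  have hsub : Ω ∩ ball x₀ σ ⊆ Ω ∩ ball x₀ ρ :=
    Set.inter_subset_inter_right Ω (ball_subset_ball hσρ)
  have hgiρ : IntegrableOn (fun y => (u y - a) ^ 2) (Ω ∩ ball x₀ ρ) volume :=
    ((Camp.memLp_inter hΩ hu x₀ ρ).sub (memLp_const a)).integrable_sq
  have hmono : ∫ y in Ω ∩ ball x₀ σ, (u y - a) ^ 2 ≤ ∫ y in Ω ∩ ball x₀ ρ, (u y - a) ^ 2 :=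
    setIntegral_mono_set hgiρ (Filter.Eventually.of_forall fun y => sq_nonneg _)
      (HasSubset.Subset.eventuallyLE hsub)
  -- step 4: Campanato bound
  set L := Real.log (1/ρ) with hLdef
  have hLgt : Real.log 2 < L := by
    rw [hLdef]
    apply Real.log_lt_log two_pos
    rw [lt_div_iff₀ hρ0]
    linarith
  have hLpos : 0 < L := lt_trans (Real.log_pos one_lt_two) hLgt
  have hcamp := hS.2 x₀ hx ρ hρ0 hρ
  rw [← ha, ← hLdef] at hcamp
  have hPpos : 0 < (ρ:ℝ)^m * L^(-κ) := by positivity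
  have hIbound : ∫ y in Ω ∩ ball x₀ ρ, (u y - a) ^ 2 ≤ ((ρ:ℝ)^m * L^(-κ)) * S^2 := by
    have hrw : (ρ:ℝ) ^ (-(m:ℝ)) * L^κ = ((ρ:ℝ)^m * L^(-κ))⁻¹ := by
      rw [Real.rpow_neg hρ0.le, Real.rpow_natCast, Real.rpow_neg hLpos.le, mul_inv, inv_inv]
    rw [hrw, inv_mul_le_iff₀ hPpos] at hcamp
    exact hcamp
  -- step 5: combine into average bound
  have hVlb : c * σ^m ≤ (volume (Ω ∩ ball x₀ σ)).toReal := hmd x₀ hx σ h0 hσ1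
  have hcσ : 0 < c * σ^m := by positivity
  have havg : ⨍ y in Ω ∩ ball x₀ σ, (u y - a) ^ 2 ≤ 2^m/c * S^2 * L^(-κ) := by
    rw [setAverage_eq, smul_eq_mul]
    have h1 : (volume (Ω ∩ ball x₀ σ)).toReal⁻¹ ≤ (c * σ^m)⁻¹ := inv_anti₀ hcσ hVlb
    have h2 : (0:ℝ) ≤ ∫ y in Ω ∩ ball x₀ σ, (u y - a) ^ 2 :=
      setIntegral_nonneg (hΩ.inter measurableSet_ball) fun y _ => sq_nonneg _
    calc (volume (Ω ∩ ball x₀ σ)).toReal⁻¹ * ∫ y in Ω ∩ ball x₀ σ, (u y - a) ^ 2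
        ≤ (c * σ^m)⁻¹ * (((ρ:ℝ)^m * L^(-κ)) * S^2) := by
          apply mul_le_mul h1 (le_trans hmono hIbound) h2 (by positivity)
      _ ≤ (c * σ^m)⁻¹ * ((2^m * σ^m * L^(-κ)) * S^2) := by
          have : (ρ:ℝ)^m ≤ 2^m * σ^m := by
            rw [← mul_pow]
            exact pow_le_pow_left₀ hρ0.le hhalf m
          have hLκ : (0:ℝ) ≤ L^(-κ) := Real.rpow_nonneg hLpos.le _
          gcongr
      _ = 2^m/c * S^2 * L^(-κ) := by
          field_simp
  -- step 6: take square roots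
  have habs : |locAvg Ω u x₀ σ - a| ≤ Real.sqrt (2^m/c * S^2 * L^(-κ)) := by
    rw [← Real.sqrt_sq_eq_abs]
    apply Real.sqrt_le_sqrt
    rw [step1]
    exact le_trans jensen havg
  have hsqrt : Real.sqrt (2^m/c * S^2 * L^(-κ)) = Real.sqrt (2^m/c) * S * L^(-(κ/2)) := by
    have hsq : L^(-κ) = (L^(-(κ/2)))^2 := by
      rw [← Real.rpow_natCast (L^(-(κ/2))) 2, ← Real.rpow_mul hLpos.le]
      norm_num
    rw [Real.sqrt_mul (by positivity), Real.sqrt_mul (by positivity), Real.sqrt_sq hS.1,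
      hsq, Real.sqrt_sq (Real.rpow_nonneg hLpos.le _)]
  rw [← hsqrt]
  exact habs

lemma Camp.chain (hκ : 2 < κ) (hc : 0 < c) (hΩ : MeasurableSet Ω)
    (hmd : MeasureDensityCond Ω c) (hu : MemLp u 2 (volume.restrict Ω))
    (hS : CampanatoSeminormLE Ω u κ S)
    {x₀ : EuclideanSpace ℝ (Fin m)} (hx : x₀ ∈ Ω) :
    ∀ n : ℕ, ∀ ρ' ρ : ℝ, 0 < ρ' → ρ' ≤ ρ → ρ < 1/2 → ρ / 2^(n+1) < ρ' →
    |locAvg Ω u x₀ ρ' - locAvg Ω u x₀ ρ| ≤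
      Real.sqrt (2^m/c) * S * ∑ k ∈ Finset.range (n+1),
        (Real.log (1/ρ) + k * Real.log 2) ^ (-(κ/2)) := by
  have hKS : 0 ≤ Real.sqrt (2^m/c) * S := mul_nonneg (Real.sqrt_nonneg _) hS.1
  intro n
  induction n with
  | zero =>
    intro ρ' ρ h0 hle hρ hgt
    norm_num at hgt
    have h2 : ρ ≤ 2 * ρ' := by linarith
    have := Camp.onestep hκ hc hΩ hmd hu hS hx h0 hle hρ h2
    simpa using this
  | succ n ih =>
    intro ρ' ρ h0 hle hρ hgt
    have hρ0 : 0 < ρ := lt_of_lt_of_le h0 hle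
    have hlogpos : 0 < Real.log (1/ρ) := by
      apply Real.log_pos
      rw [lt_div_iff₀ hρ0]
      linarith
    have hnonneg : ∀ k : ℕ, (0:ℝ) ≤ (Real.log (1/ρ) + k * Real.log 2) ^ (-(κ/2)) := by
      intro k
      apply Real.rpow_nonneg
      have : (0:ℝ) ≤ (k:ℝ) * Real.log 2 :=
        mul_nonneg (Nat.cast_nonneg k) (Real.log_nonneg one_le_two)
      linarith
    set F : ℕ → ℝ := fun k => (Real.log (1/ρ) + (k:ℝ) * Real.log 2) ^ (-(κ/2)) with hF
    have hsplit := Finset.sum_range_succ' F (n+1)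
    have hF0 : F 0 = Real.log (1/ρ) ^ (-(κ/2)) := by simp [hF]
    rcases le_or_gt ρ' (ρ/2) with hcase | hcase
    · have hρ2 : ρ/2 < 1/2 := by linarith
      have hgt' : (ρ/2) / 2^(n+1) < ρ' := by
        have he : (ρ/2) / 2^(n+1) = ρ / 2^(n+1+1) := by ring
        rw [he]
        exact hgt
      have h1 := ih ρ' (ρ/2) h0 hcase hρ2 hgt'
      have h2 := Camp.onestep hκ hc hΩ hmd hu hS hx (by linarith : (0:ℝ) < ρ/2)
        (by linarith : ρ/2 ≤ ρ) hρ (by linarith : ρ ≤ 2*(ρ/2))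
      have hlog : Real.log (1/(ρ/2)) = Real.log (1/ρ) + Real.log 2 := by
        rw [show (1:ℝ)/(ρ/2) = (1/ρ) * 2 by field_simp]
        rw [Real.log_mul (by positivity) two_ne_zero]
      have hsum : ∑ k ∈ Finset.range (n+1),
          (Real.log (1/(ρ/2)) + k * Real.log 2) ^ (-(κ/2))
          = ∑ k ∈ Finset.range (n+1), F (k+1) := by
        apply Finset.sum_congr rfl
        intro k _
        rw [hlog, hF]
        congr 1
        push_cast
        ring
      rw [hsum] at h1
      calc |locAvg Ω u x₀ ρ' - locAvg Ω u x₀ ρ|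
          ≤ |locAvg Ω u x₀ ρ' - locAvg Ω u x₀ (ρ/2)|
            + |locAvg Ω u x₀ (ρ/2) - locAvg Ω u x₀ ρ| := abs_sub_le _ _ _
        _ ≤ Real.sqrt (2^m/c) * S * (∑ k ∈ Finset.range (n+1), F (k+1))
            + Real.sqrt (2^m/c) * S * F 0 := by
            rw [hF0]
            exact add_le_add h1 h2
        _ = Real.sqrt (2^m/c) * S * ∑ k ∈ Finset.range (n+1+1), F k := by
            rw [hsplit]
            ring
    · have h2 : ρ ≤ 2 * ρ' := by linarith
      have hone := Camp.onestep hκ hc hΩ hmd hu hS hx h0 hle hρ h2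
      have hpad : Real.log (1/ρ) ^ (-(κ/2)) ≤ ∑ k ∈ Finset.range (n+1+1), F k := by
        rw [← hF0]
        exact Finset.single_le_sum (fun k _ => hnonneg k) (Finset.mem_range.mpr (Nat.succ_pos _))
      calc |locAvg Ω u x₀ ρ' - locAvg Ω u x₀ ρ|
          ≤ Real.sqrt (2^m/c) * S * Real.log (1/ρ) ^ (-(κ/2)) := hone
        _ ≤ Real.sqrt (2^m/c) * S * ∑ k ∈ Finset.range (n+1+1), F k :=
            mul_le_mul_of_nonneg_left hpad hKS

lemma Camp.master (hκ : 2 < κ) (hc : 0 < c) (hΩ : MeasurableSet Ω)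
    (hmd : MeasureDensityCond Ω c) (hu : MemLp u 2 (volume.restrict Ω))
    (hS : CampanatoSeminormLE Ω u κ S)
    {x₀ : EuclideanSpace ℝ (Fin m)} (hx : x₀ ∈ Ω) {ρ' ρ : ℝ}
    (h0 : 0 < ρ') (hle : ρ' ≤ ρ) (hρ : ρ < 1/2) :
    |locAvg Ω u x₀ ρ' - locAvg Ω u x₀ ρ| ≤
      (Real.sqrt (2^m/c) * ((1 + 1/(κ/2-1)) / Real.log 2)) * S *
        Real.log (1/ρ) ^ (-(κ/2-1)) := by
  have hρ0 : 0 < ρ := lt_of_lt_of_le h0 hle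
  obtain ⟨n, hn⟩ := exists_pow_lt_of_lt_one (show (0:ℝ) < ρ'/ρ by positivity)
    (show (1:ℝ)/2 < 1 by norm_num)
  have hgt : ρ / 2^(n+1) < ρ' := by
    have h1 : ρ * (1/2:ℝ)^n < ρ' := by
      rw [lt_div_iff₀ hρ0] at hn
      linarith [hn]
    have h2 : ρ * (1/2:ℝ)^n = ρ / 2^n := by
      rw [one_div, inv_pow, div_eq_mul_inv]
    have h3 : ρ / 2^(n+1) < ρ / 2^n := by
      apply div_lt_div_of_pos_left hρ0 (by positivity)
      exact pow_lt_pow_right₀ one_lt_two (Nat.lt_succ_self n)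
    linarith [h2 ▸ h1]
  have hchain := Camp.chain hκ hc hΩ hmd hu hS hx n ρ' ρ h0 hle hρ hgt
  have hA : Real.log 2 ≤ Real.log (1/ρ) := by
    apply le_of_lt
    apply Real.log_lt_log two_pos
    rw [lt_div_iff₀ hρ0]
    linarith
  have hp : 1 < κ/2 := by linarith
  have hsum := Camp.sum_rpow_bound hp hA n
  have hKS : 0 ≤ Real.sqrt (2^m/c) * S := mul_nonneg (Real.sqrt_nonneg _) hS.1
  calc |locAvg Ω u x₀ ρ' - locAvg Ω u x₀ ρ|
      ≤ Real.sqrt (2^m/c) * S * ∑ k ∈ Finset.range (n+1),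
          (Real.log (1/ρ) + k * Real.log 2) ^ (-(κ/2)) := hchain
    _ ≤ Real.sqrt (2^m/c) * S *
          (((1 + 1/(κ/2-1)) / Real.log 2) * Real.log (1/ρ) ^ (-(κ/2-1))) :=
        mul_le_mul_of_nonneg_left hsum hKS
    _ = (Real.sqrt (2^m/c) * ((1 + 1/(κ/2-1)) / Real.log 2)) * S *
          Real.log (1/ρ) ^ (-(κ/2-1)) := by ring

end onestep

/-- For `κ > 2`, the averages `u_{x₀,ρ}` converge as `ρ → 0⁺` to a precise representative
`ũ` of `u`, with a uniform logarithmic rate. -/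
theorem averages_converge_to_representative {m : ℕ} (hm : 1 ≤ m) (κ c : ℝ)
    (hκ : 2 < κ) (hc : 0 < c) :
    ∃ C : ℝ, 0 < C ∧
      ∀ (Ω : Set (EuclideanSpace ℝ (Fin m))), IsOpen Ω → MeasureDensityCond Ω c →
        ∀ (u : EuclideanSpace ℝ (Fin m) → ℝ), MemLp u 2 (volume.restrict Ω) →
          ∀ S : ℝ, CampanatoSeminormLE Ω u κ S →
            ∃ utilde : EuclideanSpace ℝ (Fin m) → ℝ,
              (∀ x₀ ∈ Ω, Tendsto (fun ρ : ℝ => locAvg Ω u x₀ ρ) (𝓝[>] 0)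
                (𝓝 (utilde x₀))) ∧
              (∀ᵐ x ∂(volume.restrict Ω), utilde x = u x) ∧
              (∀ x₀ ∈ Ω, ∀ r : ℝ, 0 < r → r < 1/2 →
                |locAvg Ω u x₀ r - utilde x₀| ≤
                  C * S * (Real.log (1/r)) ^ (-(κ / 2 - 1))) := by
  classical
  set C : ℝ := Real.sqrt (2^m/c) * ((1 + 1/(κ/2-1)) / Real.log 2) with hCdef
  have hlog2 : 0 < Real.log 2 := Real.log_pos one_lt_two
  have hCpos : 0 < C := by
    apply mul_pos
    · exact Real.sqrt_pos.mpr (by positivity)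
    · apply div_pos ?_ hlog2
      have : 0 < 1/(κ/2-1) := by
        apply div_pos one_pos
        linarith
      linarith
  refine ⟨C, hCpos, ?_⟩
  intro Ω hΩopen hmd u hu S hS
  have hΩ : MeasurableSet Ω := hΩopen.measurableSet
  -- the rate function tends to 0
  have hrate : Tendsto (fun δ : ℝ => C * S * Real.log (1/δ) ^ (-(κ/2-1)))
      (𝓝[>] 0) (𝓝 0) := by
    have h1 : Tendsto (fun δ : ℝ => 1/δ) (𝓝[>] (0:ℝ)) atTop := by
      simpa only [one_div] using tendsto_inv_nhdsGT_zero
    have h2 : Tendsto (fun δ : ℝ => Real.log (1/δ)) (𝓝[>] (0:ℝ)) atTop :=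
      Real.tendsto_log_atTop.comp h1
    have h3 : Tendsto (fun x : ℝ => x ^ (-(κ/2-1))) atTop (𝓝 0) :=
      tendsto_rpow_neg_atTop (by linarith)
    have h4 := (h3.comp h2).const_mul (C * S)
    simpa using h4
  -- existence of limits
  have key : ∀ x₀ ∈ Ω, ∃ l : ℝ,
      Tendsto (fun ρ : ℝ => locAvg Ω u x₀ ρ) (𝓝[>] 0) (𝓝 l) := by
    intro x₀ hx
    have hcauchy : Cauchy (map (fun ρ : ℝ => locAvg Ω u x₀ ρ) (𝓝[>] (0:ℝ))) := by
      rw [Metric.cauchy_iff]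
      refine ⟨map_neBot, ?_⟩
      intro ε hε
      have h1 : ∀ᶠ δ in 𝓝[>] (0:ℝ), C * S * Real.log (1/δ) ^ (-(κ/2-1)) < ε :=
        hrate.eventually_lt_const hε
      have h2 : ∀ᶠ δ in 𝓝[>] (0:ℝ), δ ∈ Set.Ioo (0:ℝ) (1/2) :=
        Ioo_mem_nhdsGT_of_mem ⟨le_refl _, by norm_num⟩
      obtain ⟨δ, hδ1, hδ2⟩ := (h1.and h2).exists
      have hδpos : 0 < δ := hδ2.1
      have hδhalf : δ < 1/2 := hδ2.2
      have hlogδ : 0 < Real.log (1/δ) := by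
        apply Real.log_pos
        rw [lt_div_iff₀ hδpos]
        linarith
      refine ⟨(fun ρ : ℝ => locAvg Ω u x₀ ρ) '' (Set.Ioo 0 δ),
        image_mem_map (Ioo_mem_nhdsGT_of_mem ⟨le_refl _, hδpos⟩), ?_⟩
      rintro _ ⟨ρ₁, hρ₁, rfl⟩ _ ⟨ρ₂, hρ₂, rfl⟩
      have hCS : 0 ≤ C * S := mul_nonneg hCpos.le hS.1
      have hbound : ∀ s t : ℝ, 0 < s → s ≤ t → t < δ →
          dist (locAvg Ω u x₀ s) (locAvg Ω u x₀ t) < ε := by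
        intro s t hs hst htδ
        have ht12 : t < 1/2 := lt_trans htδ hδhalf
        have hmaster := Camp.master hκ hc hΩ hmd hu hS hx hs hst ht12
        have ht0 : 0 < t := lt_of_lt_of_le hs hst
        have hKS' : 0 ≤ Real.sqrt (2^m/c) * ((1 + 1/(κ/2-1)) / Real.log 2) * S :=
          mul_nonneg (mul_nonneg (Real.sqrt_nonneg _) (le_of_lt (div_pos
            (by have := div_pos one_pos (show (0:ℝ) < κ/2-1 by linarith); linarith)
            hlog2))) hS.1
        rw [Real.dist_eq]
        apply lt_of_le_of_lt (le_trans hmaster ?_) hδ1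
        apply mul_le_mul_of_nonneg_left ?_ hKS'
        exact Camp.rpow_anti hlogδ
          (Real.log_le_log (by positivity)
            (one_div_le_one_div_of_le ht0 htδ.le)) (by linarith)
      rcases le_total ρ₁ ρ₂ with hle | hle
      · exact hbound ρ₁ ρ₂ hρ₁.1 hle hρ₂.2
      · rw [dist_comm]
        exact hbound ρ₂ ρ₁ hρ₂.1 hle hρ₁.2
    obtain ⟨l, hl⟩ := CompleteSpace.complete hcauchy
    exact ⟨l, hl⟩
  set utilde : EuclideanSpace ℝ (Fin m) → ℝ := fun x =>
    if h : ∃ l : ℝ, Tendsto (fun ρ : ℝ => locAvg Ω u x ρ) (𝓝[>] 0) (𝓝 l)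
    then h.choose else 0 with hut
  have htend : ∀ x₀ ∈ Ω,
      Tendsto (fun ρ : ℝ => locAvg Ω u x₀ ρ) (𝓝[>] 0) (𝓝 (utilde x₀)) := by
    intro x₀ hx
    have h := key x₀ hx
    simp only [hut, dif_pos h]
    exact h.choose_spec
  refine ⟨utilde, htend, ?_, ?_⟩
  · -- a.e. identification with u
    haveI : Nonempty (Fin m) := ⟨⟨0, Nat.lt_of_lt_of_le Nat.zero_lt_one hm⟩⟩
    haveI : Nontrivial (EuclideanSpace ℝ (Fin m)) := by
      refine nontrivial_of_ne (EuclideanSpace.single ⟨0, hm⟩ (1:ℝ)) 0 ?_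
      intro h
      have := congrArg (fun v : EuclideanSpace ℝ (Fin m) => v ⟨0, hm⟩) h
      simp [EuclideanSpace.single_apply] at this
    set v : EuclideanSpace ℝ (Fin m) → ℝ := Ω.indicator u with hv
    have hloc : LocallyIntegrable v volume := by
      rw [locallyIntegrable_iff]
      intro K hK
      obtain ⟨R, hR⟩ : ∃ R, K ⊆ ball 0 R := hK.isBounded.subset_ball 0
      apply IntegrableOn.mono_set ?_ hR
      rw [IntegrableOn, hv, integrable_indicator_iff hΩ]
      rw [IntegrableOn, Measure.restrict_restrict hΩ]
      haveI : IsFiniteMeasure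
          (volume.restrict (Ω ∩ ball (0 : EuclideanSpace ℝ (Fin m)) R)) :=
        ⟨by rw [Measure.restrict_apply_univ]; exact Camp.vol_lt_top Ω 0 R⟩
      exact (Camp.memLp_inter hΩ hu 0 R).integrable one_le_two
    have hleb := IsUnifLocDoublingMeasure.ae_tendsto_average
      (μ := (volume : Measure (EuclideanSpace ℝ (Fin m)))) hloc 1
    have hsphere : ∀ (x : EuclideanSpace ℝ (Fin m)) (ρ : ℝ),
        volume.restrict (ball x ρ) = volume.restrict (closedBall x ρ) := by
      intro x ρ
      apply Measure.restrict_congr_set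
      apply MeasureTheory.ae_eq_set.2
      constructor
      · rw [Set.diff_eq_empty.2 ball_subset_closedBall]
        exact measure_empty
      · rw [closedBall_diff_ball]
        exact Measure.addHaar_sphere volume x ρ
    filter_upwards [ae_restrict_of_ae hleb, ae_restrict_mem hΩ] with x hx hmem
    obtain ⟨ε, hε, hball⟩ := Metric.isOpen_iff.mp hΩopen x hmem
    have hx' : Tendsto (fun ρ : ℝ => ⨍ y in closedBall x ρ, v y) (𝓝[>] 0) (𝓝 (v x)) := by
      apply hx (fun _ => x) id tendsto_id
      filter_upwards [self_mem_nhdsWithin] with ρ hρ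
      have hρ0 : (0:ℝ) < ρ := hρ
      simp only [id]
      rw [one_mul]
      exact mem_closedBall_self hρ0.le
    have hev : ∀ᶠ ρ in 𝓝[>] (0:ℝ), locAvg Ω u x ρ = ⨍ y in closedBall x ρ, v y := by
      filter_upwards [Ioo_mem_nhdsGT_of_mem ⟨le_refl (0:ℝ), hε⟩] with ρ hρ
      have hsubcb : closedBall x ρ ⊆ Ω := (closedBall_subset_ball hρ.2).trans hball
      have h1 : Ω ∩ ball x ρ = ball x ρ :=
        Set.inter_eq_self_of_subset_right (ball_subset_closedBall.trans hsubcb)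
      rw [locAvg, h1]
      show average (volume.restrict (ball x ρ)) u
          = average (volume.restrict (closedBall x ρ)) v
      rw [hsphere x ρ]
      exact average_congr ((ae_restrict_iff' measurableSet_closedBall).2
        (ae_of_all _ fun y hy => (Set.indicator_of_mem (hsubcb hy) u).symm))
    have hx'' : Tendsto (fun ρ : ℝ => locAvg Ω u x ρ) (𝓝[>] 0) (𝓝 (v x)) :=
      Tendsto.congr' (show (fun ρ : ℝ => ⨍ y in closedBall x ρ, v y)
        =ᶠ[𝓝[>] (0:ℝ)] fun ρ => locAvg Ω u x ρ from hev.mono fun ρ h => h.symm) hx'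
    have := tendsto_nhds_unique (htend x hmem) hx''
    rw [this, hv, Set.indicator_of_mem hmem]
  · -- quantitative bound
    intro x₀ hx r hr0 hr12
    have ht := htend x₀ hx
    have h1 : Tendsto (fun ρ' : ℝ => |locAvg Ω u x₀ r - locAvg Ω u x₀ ρ'|)
        (𝓝[>] 0) (𝓝 |locAvg Ω u x₀ r - utilde x₀|) :=
      (tendsto_const_nhds.sub ht).abs
    have h2 : ∀ᶠ ρ' in 𝓝[>] (0:ℝ),
        |locAvg Ω u x₀ r - locAvg Ω u x₀ ρ'| ≤ C * S * Real.log (1/r) ^ (-(κ/2-1)) := by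
      filter_upwards [Ioo_mem_nhdsGT_of_mem ⟨le_refl (0:ℝ), hr0⟩] with ρ' hρ'
      rw [abs_sub_comm]
      exact Camp.master hκ hc hΩ hmd hu hS hx hρ'.1 hρ'.2.le hr12
    exact le_of_tendsto h1 h2
end

section
/- Let m ≥ 1, κ ≥ 0, let Ω ⊆ ℝ^m be an open set satisfying the measure density condition with constant c > 0, and let u ∈ L²(Ω) with [u]_{2,m,κ} ≤ S < ∞. Then there is a constant C depending only on m, c and κ such that for all x, y ∈ Ω with 0 < |x − y| =: r < 1/4 one has |u_{x,2r} − u_{y,2r}| ≤ C · S · (log(1/r))^{−κ/2}. -/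
open MeasureTheory Metric Filter
open scoped Topology ENNReal

/-- Integrability of `(u - a)²` on `Ω ∩ B_ρ(z₀)` for `u ∈ L²(Ω)`. -/
lemma aux_int_sq {m : ℕ} {Ω : Set (EuclideanSpace ℝ (Fin m))}
    {u : EuclideanSpace ℝ (Fin m) → ℝ} (hu : MemLp u 2 (volume.restrict Ω))
    (z₀ : EuclideanSpace ℝ (Fin m)) (ρ : ℝ) (a : ℝ) :
    IntegrableOn (fun z => (u z - a) ^ 2) (Ω ∩ ball z₀ ρ) := by
  have hfin : volume (Ω ∩ ball z₀ ρ) < ⊤ :=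
    lt_of_le_of_lt (measure_mono Set.inter_subset_right) measure_ball_lt_top
  have h1 : MemLp u 2 (volume.restrict (Ω ∩ ball z₀ ρ)) := by
    rw [Set.inter_comm, ← Measure.restrict_restrict measurableSet_ball]
    exact hu.restrict _
  haveI : Fact (volume (Ω ∩ ball z₀ ρ) < ⊤) := ⟨hfin⟩
  exact (h1.sub (memLp_const a)).integrable_sq

/-- Comparison of averages at nearby centers: for `x, y ∈ Ω` with `0 < |x-y| = r < 1/4`,
`|u_{x,2r} - u_{y,2r}| ≤ C S (log(1/r))^{-κ/2}`. -/
theorem averages_at_nearby_centers {m : ℕ} (hm : 1 ≤ m) (κ c : ℝ)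
    (hκ : 0 ≤ κ) (hc : 0 < c) :
    ∃ C : ℝ, 0 < C ∧
      ∀ (Ω : Set (EuclideanSpace ℝ (Fin m))), IsOpen Ω → MeasureDensityCond Ω c →
        ∀ (u : EuclideanSpace ℝ (Fin m) → ℝ), MemLp u 2 (volume.restrict Ω) →
          ∀ S : ℝ, CampanatoSeminormLE Ω u κ S →
            ∀ x ∈ Ω, ∀ y ∈ Ω, x ≠ y → dist x y < 1/4 →
              |locAvg Ω u x (2 * dist x y) - locAvg Ω u y (2 * dist x y)| ≤
                C * S * (Real.log (1 / dist x y)) ^ (-(κ / 2)) := by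
  have h2κ : (0:ℝ) < 2 ^ κ := Real.rpow_pos_of_pos (by norm_num) κ
  refine ⟨Real.sqrt (2 ^ (m + 2) * 2 ^ κ / c), Real.sqrt_pos.mpr (by positivity), ?_⟩
  intro Ω hΩ hdens u hu S hS x hx y hy hxy hdist
  set r : ℝ := dist x y with hrdef
  have hr0 : 0 < r := dist_pos.mpr hxy
  have hr1 : r < 1/4 := hdist
  set a : ℝ := locAvg Ω u x (2 * r) with ha
  set b : ℝ := locAvg Ω u y (2 * r) with hb
  set ℓ : ℝ := Real.log (1 / r) with hℓdef
  set L : ℝ := Real.log (1 / (2 * r)) with hLdef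
  have hℓ4 : Real.log 4 ≤ ℓ := by
    apply Real.log_le_log (by norm_num)
    rw [le_div_iff₀ hr0]; linarith
  have hℓ0 : 0 < ℓ := lt_of_lt_of_le (Real.log_pos (by norm_num)) hℓ4
  have hL2 : Real.log 2 ≤ L := by
    apply Real.log_le_log (by norm_num)
    rw [le_div_iff₀ (by linarith)]; linarith
  have hL0 : 0 < L := lt_of_lt_of_le (Real.log_pos (by norm_num)) hL2
  have hLℓ : ℓ / 2 ≤ L := by
    have hlog : L = ℓ - Real.log 2 := by
      rw [hLdef, hℓdef, show (1:ℝ) / (2 * r) = (1 / r) / 2 by ring,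
        Real.log_div (by positivity) (by norm_num)]
    have h4 : Real.log 4 = 2 * Real.log 2 := by
      rw [show (4:ℝ) = 2 ^ 2 by norm_num, Real.log_pow]; push_cast; ring
    rw [hlog]; rw [h4] at hℓ4; linarith
  -- the three sets
  set A : Set (EuclideanSpace ℝ (Fin m)) := Ω ∩ ball x r with hA
  set Ax : Set (EuclideanSpace ℝ (Fin m)) := Ω ∩ ball x (2 * r) with hAx
  set Ay : Set (EuclideanSpace ℝ (Fin m)) := Ω ∩ ball y (2 * r) with hAy
  have hAAx : A ⊆ Ax := Set.inter_subset_inter_right _ (ball_subset_ball (by linarith))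
  have hAAy : A ⊆ Ay := Set.inter_subset_inter_right _ (ball_subset_ball' (by linarith))
  have hAfin : volume A < ⊤ :=
    lt_of_le_of_lt (measure_mono Set.inter_subset_right) measure_ball_lt_top
  have hAmeas : (0:ℝ) < (volume A).toReal := by
    have := hdens x hx r hr0 (by linarith)
    have : c * r ^ m ≤ (volume A).toReal := this
    nlinarith [pow_pos hr0 m]
  have hAlb : c * r ^ m ≤ (volume A).toReal := hdens x hx r hr0 (by linarith)
  -- integrability
  have hIa : IntegrableOn (fun z => (u z - a) ^ 2) Ax := aux_int_sq hu x (2 * r) a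
  have hIb : IntegrableOn (fun z => (u z - b) ^ 2) Ay := aux_int_sq hu y (2 * r) b
  have hIaA : IntegrableOn (fun z => (u z - a) ^ 2) A := hIa.mono_set hAAx
  have hIbA : IntegrableOn (fun z => (u z - b) ^ 2) A := hIb.mono_set hAAy
  -- Step A : |A| (a-b)² ≤ 2∫_Ax (u-a)² + 2∫_Ay (u-b)²
  have stepA : (volume A).toReal * (a - b) ^ 2 ≤
      2 * (∫ z in Ax, (u z - a) ^ 2) + 2 * (∫ z in Ay, (u z - b) ^ 2) := by
    have e1 : (volume A).toReal * (a - b) ^ 2 = ∫ _ in A, (a - b) ^ 2 := by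
      rw [setIntegral_const]; simp [smul_eq_mul, Measure.real]
    rw [e1]
    have mono1 : ∫ _ in A, (a - b) ^ 2 ≤
        ∫ z in A, (2 * (u z - a) ^ 2 + 2 * (u z - b) ^ 2) := by
      apply setIntegral_mono_on
      · exact (integrableOn_const hAfin.ne)
      · exact (hIaA.const_mul 2).add (hIbA.const_mul 2)
      · exact (hΩ.measurableSet.inter measurableSet_ball)
      · intro z _; nlinarith [sq_nonneg ((u z - a) + (u z - b))]
    have hsum : IntegrableOn (fun z => (u z - a) ^ 2 + (u z - b) ^ 2) A volume :=
      hIaA.add hIbA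
    have split : ∫ z in A, (2 * (u z - a) ^ 2 + 2 * (u z - b) ^ 2) =
        2 * (∫ z in A, (u z - a) ^ 2) + 2 * (∫ z in A, (u z - b) ^ 2) := by
      rw [show (fun z => 2 * (u z - a) ^ 2 + 2 * (u z - b) ^ 2)
          = (fun z => ((u z - a) ^ 2 + (u z - b) ^ 2) + ((u z - a) ^ 2 + (u z - b) ^ 2))
          from funext fun z => by ring]
      rw [integral_add hsum hsum, integral_add hIaA hIbA]
      ring
    have m1 : ∫ z in A, (u z - a) ^ 2 ≤ ∫ z in Ax, (u z - a) ^ 2 :=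
      setIntegral_mono_set hIa (Eventually.of_forall fun z => sq_nonneg _)
        (HasSubset.Subset.eventuallyLE hAAx)
    have m2 : ∫ z in A, (u z - b) ^ 2 ≤ ∫ z in Ay, (u z - b) ^ 2 :=
      setIntegral_mono_set hIb (Eventually.of_forall fun z => sq_nonneg _)
        (HasSubset.Subset.eventuallyLE hAAy)
    calc ∫ _ in A, (a - b) ^ 2
        ≤ ∫ z in A, (2 * (u z - a) ^ 2 + 2 * (u z - b) ^ 2) := mono1
      _ = 2 * (∫ z in A, (u z - a) ^ 2) + 2 * (∫ z in A, (u z - b) ^ 2) := split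
      _ ≤ 2 * (∫ z in Ax, (u z - a) ^ 2) + 2 * (∫ z in Ay, (u z - b) ^ 2) :=
        add_le_add (mul_le_mul_of_nonneg_left m1 (by norm_num : (0:ℝ) ≤ 2))
          (mul_le_mul_of_nonneg_left m2 (by norm_num : (0:ℝ) ≤ 2))
  -- Step B : Campanato bounds
  have h2r0 : (0:ℝ) < 2 * r := by linarith
  have hP0 : (0:ℝ) < (2 * r) ^ m := pow_pos h2r0 m
  have hLκ : (0:ℝ) < L ^ κ := Real.rpow_pos_of_pos hL0 κ
  have hrpow : (2 * r) ^ (-(m : ℝ)) = ((2 * r) ^ m)⁻¹ := by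
    rw [Real.rpow_neg h2r0.le, Real.rpow_natCast]
  have camp : ∀ z₀ ∈ Ω, ∫ z in Ω ∩ ball z₀ (2 * r), (u z - locAvg Ω u z₀ (2 * r)) ^ 2 ≤
      S ^ 2 * (2 * r) ^ m / L ^ κ := by
    intro z₀ hz₀
    have h := hS.2 z₀ hz₀ (2 * r) h2r0 (by linarith)
    rw [hrpow] at h
    rw [le_div_iff₀ hLκ]
    set I := ∫ z in Ω ∩ ball z₀ (2 * r), (u z - locAvg Ω u z₀ (2 * r)) ^ 2
    have : ((2 * r) ^ m)⁻¹ * L ^ κ * I ≤ S ^ 2 := h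
    have h2 : (2 * r) ^ m * (((2 * r) ^ m)⁻¹ * L ^ κ * I) ≤ (2 * r) ^ m * S ^ 2 :=
      mul_le_mul_of_nonneg_left this hP0.le
    calc I * L ^ κ = (2 * r) ^ m * (((2 * r) ^ m)⁻¹ * L ^ κ * I) := by
          field_simp
      _ ≤ (2 * r) ^ m * S ^ 2 := h2
      _ = S ^ 2 * (2 * r) ^ m := by ring
  have campx : ∫ z in Ax, (u z - a) ^ 2 ≤ S ^ 2 * (2 * r) ^ m / L ^ κ := camp x hx
  have campy : ∫ z in Ay, (u z - b) ^ 2 ≤ S ^ 2 * (2 * r) ^ m / L ^ κ := camp y hy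
  -- Step C : (a-b)² ≤ (2^(m+2)/c) S² L^(-κ)
  have hpow2m : (2 * r) ^ m = 2 ^ m * r ^ m := mul_pow 2 r m
  have stepC : (a - b) ^ 2 ≤ 2 ^ (m + 2) / c * S ^ 2 * L ^ (-κ) := by
    have h1 : c * r ^ m * (a - b) ^ 2 ≤ 4 * (S ^ 2 * (2 * r) ^ m / L ^ κ) := by
      calc c * r ^ m * (a - b) ^ 2 ≤ (volume A).toReal * (a - b) ^ 2 :=
            mul_le_mul_of_nonneg_right hAlb (sq_nonneg _)
        _ ≤ 2 * (∫ z in Ax, (u z - a) ^ 2) + 2 * (∫ z in Ay, (u z - b) ^ 2) := stepA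
        _ ≤ 2 * (S ^ 2 * (2 * r) ^ m / L ^ κ) + 2 * (S ^ 2 * (2 * r) ^ m / L ^ κ) :=
            add_le_add (mul_le_mul_of_nonneg_left campx (by norm_num : (0:ℝ) ≤ 2))
              (mul_le_mul_of_nonneg_left campy (by norm_num : (0:ℝ) ≤ 2))
        _ = 4 * (S ^ 2 * (2 * r) ^ m / L ^ κ) := by ring
    have hrm : (0:ℝ) < r ^ m := pow_pos hr0 m
    have h2 : (a - b) ^ 2 ≤ 4 * (S ^ 2 * (2 * r) ^ m / L ^ κ) / (c * r ^ m) := by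
      rw [le_div_iff₀ (by positivity)]
      nlinarith [h1]
    refine h2.trans (le_of_eq ?_)
    rw [Real.rpow_neg hL0.le]
    calc 4 * (S ^ 2 * (2 * r) ^ m / L ^ κ) / (c * r ^ m)
        = 4 * 2 ^ m * S ^ 2 * (L ^ κ)⁻¹ * c⁻¹ * (r ^ m * (r ^ m)⁻¹) := by
          rw [hpow2m]; ring
      _ = 2 ^ (m + 2) / c * S ^ 2 * (L ^ κ)⁻¹ := by
          rw [mul_inv_cancel₀ hrm.ne', pow_add]; ring
  -- Step D : L^(-κ) ≤ 2^κ ℓ^(-κ)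
  have stepD : L ^ (-κ) ≤ 2 ^ κ * ℓ ^ (-κ) := by
    have h1 : L ^ (-κ) ≤ (ℓ / 2) ^ (-κ) :=
      Real.rpow_le_rpow_of_nonpos (by positivity) hLℓ (by linarith)
    have h2 : (ℓ / 2) ^ (-κ) = 2 ^ κ * ℓ ^ (-κ) := by
      rw [Real.div_rpow hℓ0.le (by norm_num), Real.rpow_neg (by norm_num : (0:ℝ) ≤ 2),
        div_eq_mul_inv, inv_inv, mul_comm]
    rw [h2] at h1; exact h1
  -- Step E : conclude
  have hS0 : 0 ≤ S := hS.1
  have hℓκ2 : (ℓ ^ (-(κ / 2))) ^ 2 = ℓ ^ (-κ) := by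
    rw [sq, ← Real.rpow_add hℓ0]; ring_nf
  have final_sq : (a - b) ^ 2 ≤
      (Real.sqrt (2 ^ (m + 2) * 2 ^ κ / c) * S * ℓ ^ (-(κ / 2))) ^ 2 := by
    have hRHS : (Real.sqrt (2 ^ (m + 2) * 2 ^ κ / c) * S * ℓ ^ (-(κ / 2))) ^ 2 =
        2 ^ (m + 2) * 2 ^ κ / c * S ^ 2 * ℓ ^ (-κ) := by
      rw [mul_pow, mul_pow, Real.sq_sqrt (by positivity), hℓκ2]
    rw [hRHS]
    have hℓκ : (0:ℝ) ≤ ℓ ^ (-κ) := (Real.rpow_pos_of_pos hℓ0 _).le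
    calc (a - b) ^ 2 ≤ 2 ^ (m + 2) / c * S ^ 2 * L ^ (-κ) := stepC
      _ ≤ 2 ^ (m + 2) / c * S ^ 2 * (2 ^ κ * ℓ ^ (-κ)) := by
          apply mul_le_mul_of_nonneg_left stepD (by positivity)
      _ = 2 ^ (m + 2) * 2 ^ κ / c * S ^ 2 * ℓ ^ (-κ) := by ring
  have := Real.sqrt_le_sqrt final_sq
  rw [Real.sqrt_sq_eq_abs, Real.sqrt_sq (by positivity)] at this
  exact this
end

section
/- Let m ≥ 1, κ > 2, let Ω ⊆ ℝ^m be an open set satisfying the measure density condition with constant c > 0, and let u ∈ L²(Ω) with [u]_{2,m,κ} ≤ S < ∞. Then u has a continuous representative: there exists a continuous function ũ : Ω → ℝ with ũ = u almost everywhere on Ω, and a constant C depending only on m, c and κ such that |ũ(x) − ũ(y)| ≤ C · S · (log(1/|x−y|))^{−(κ/2 − 1)} for all x, y ∈ Ω with 0 < |x − y| < 1/4. -/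
open MeasureTheory Metric Filter
open scoped Topology ENNReal

namespace CampAux

/-- Tangent-line/Bernoulli type inequality: for `0 < a ≤ b`, `0 < p`,
`p (b-a) b^(-p-1) ≤ a^(-p) - b^(-p)`. -/
lemma tangent {p a b : ℝ} (hp : 0 < p) (ha : 0 < a) (hab : a ≤ b) :
    p * (b - a) * b ^ (-p - 1) ≤ a ^ (-p) - b ^ (-p) := by
  have hb : 0 < b := ha.trans_le hab
  set t : ℝ := a / b with ht
  have ht0 : 0 < t := div_pos ha hb
  have ht1 : t ≤ 1 := (div_le_one hb).2 hab
  -- key : 1 + p*(1-t) ≤ t^(-p)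
  have hkey : 1 + p * (1 - t) ≤ t ^ (-p) := by
    have h1 : t ^ p ≤ Real.exp (-(p * (1 - t))) := by
      rw [Real.rpow_def_of_pos ht0]
      apply Real.exp_le_exp.2
      have := Real.log_le_sub_one_of_pos ht0
      nlinarith
    have h2 : 1 + p * (1 - t) ≤ Real.exp (p * (1 - t)) := by
      have := Real.add_one_le_exp (p * (1 - t))
      linarith
    have h3 : Real.exp (-(p * (1 - t))) = (Real.exp (p * (1 - t)))⁻¹ := by
      rw [Real.exp_neg]
    have h4 : t ^ p ≤ (1 + p * (1 - t))⁻¹ := by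
      rw [h3] at h1
      have hpos : (0:ℝ) < 1 + p * (1 - t) := by nlinarith
      calc t ^ p ≤ (Real.exp (p * (1 - t)))⁻¹ := h1
        _ ≤ (1 + p * (1 - t))⁻¹ := by
            apply inv_anti₀ hpos h2
    rw [Real.rpow_neg ht0.le]
    have hpos : (0:ℝ) < 1 + p * (1 - t) := by nlinarith
    have htp : 0 < t ^ p := Real.rpow_pos_of_pos ht0 p
    rw [le_inv_comm₀ hpos htp]
    exact h4
  -- multiply by b^(-p)
  have hbp : 0 < b ^ (-p) := Real.rpow_pos_of_pos hb _
  have e1 : a ^ (-p) = t ^ (-p) * b ^ (-p) := by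
    rw [ht, Real.div_rpow ha.le hb.le, div_mul_cancel₀]
    exact (Real.rpow_pos_of_pos hb _).ne'
  have e2 : b ^ (-p - 1) = b ^ (-p) * b⁻¹ := by
    rw [Real.rpow_sub hb, Real.rpow_one]
    rfl
  have e3 : p * (1 - t) = p * (b - a) * b⁻¹ := by
    field_simp [ht]
    rw [ht, sub_mul, div_mul_cancel₀ _ hb.ne', one_mul]
  have := mul_le_mul_of_nonneg_right hkey hbp.le
  rw [e1, e2]
  nlinarith [hbp.le]

end CampAux

namespace CampAux2
open CampAux

lemma sum_bound {p t L : ℝ} (hp : 0 < p) (ht : 0 < t) (hL : t ≤ L) (n : ℕ) :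
    ∑ j ∈ Finset.range n, (L + (j : ℝ) * t) ^ (-(p + 1)) ≤ (1 / t + 1 / (p * t)) * L ^ (-p) := by
  have hL0 : 0 < L := ht.trans_le hL
  set f : ℕ → ℝ := fun j => (L + (j : ℝ) * t) ^ (-p) with hf
  set g : ℕ → ℝ := fun j => (L + (j : ℝ) * t) ^ (-(p + 1)) with hg
  have hLj : ∀ j : ℕ, 0 < L + (j : ℝ) * t := by
    intro j
    have : (0:ℝ) ≤ (j : ℝ) * t := by positivity
    linarith
  have hgnn : ∀ j, 0 ≤ g j := fun j => Real.rpow_nonneg (hLj j).le _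
  have key : ∀ n : ℕ, ∑ j ∈ Finset.range (n + 1), g j ≤
      L ^ (-(p + 1)) + 1 / (p * t) * (f 0 - f n) := by
    intro n
    induction n with
    | zero =>
      simp [g, f]
    | succ n ih =>
      rw [Finset.sum_range_succ]
      have htan : g (n + 1) ≤ 1 / (p * t) * (f n - f (n + 1)) := by
        have h := tangent (p := p) (a := L + (n : ℝ) * t) (b := L + ((n : ℝ) + 1) * t)
          hp (hLj n) (by nlinarith)
        have hb : L + ((n + 1 : ℕ) : ℝ) * t = L + ((n : ℝ) + 1) * t := by push_cast; ring
        have hsub : (L + ((n:ℝ)+1) * t) - (L + (n:ℝ) * t) = t := by ring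
        rw [hsub] at h
        have hexp : -p - 1 = -(p + 1) := by ring
        rw [hexp] at h
        have hpt : 0 < p * t := mul_pos hp ht
        simp only [g, f, hb]
        have hh := mul_le_mul_of_nonneg_left h (le_of_lt (by positivity : (0:ℝ) < 1/(p*t)))
        calc (L + ((n:ℝ)+1)*t) ^ (-(p+1))
            = 1/(p*t) * (p * t * (L + ((n:ℝ)+1)*t) ^ (-(p+1))) := by field_simp
          _ ≤ 1/(p*t) * ((L + (n:ℝ)*t) ^ (-p) - (L + ((n:ℝ)+1)*t) ^ (-p)) := hh
      calc ∑ j ∈ Finset.range (n+1), g j + g (n+1)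
          ≤ (L ^ (-(p+1)) + 1 / (p * t) * (f 0 - f n)) + 1 / (p * t) * (f n - f (n+1)) := by
            exact add_le_add ih htan
        _ = L ^ (-(p+1)) + 1 / (p * t) * (f 0 - f (n+1)) := by ring
  -- conclude
  have hmono : ∑ j ∈ Finset.range n, g j ≤ ∑ j ∈ Finset.range (n + 1), g j := by
    rw [Finset.sum_range_succ]
    exact le_add_of_nonneg_right (hgnn n)
  have hfn : f n ≤ f 0 → True := fun _ => trivial
  have hf0 : f 0 = L ^ (-p) := by simp [f]
  have hfnn : 0 ≤ f n := Real.rpow_nonneg (hLj n).le _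
  have h1 : L ^ (-(p+1)) ≤ 1/t * L ^ (-p) := by
    have : L ^ (-(p+1)) = L ^ (-p) * L⁻¹ := by
      rw [← Real.rpow_neg_one L, ← Real.rpow_add hL0]
      ring_nf
    rw [this]
    have hLinv : L⁻¹ ≤ t⁻¹ := inv_anti₀ ht hL
    have := mul_le_mul_of_nonneg_left hLinv (Real.rpow_nonneg hL0.le (-p))
    calc L ^ (-p) * L⁻¹ ≤ L ^ (-p) * t⁻¹ := this
      _ = 1/t * L ^ (-p) := by ring
  calc ∑ j ∈ Finset.range n, g j ≤ ∑ j ∈ Finset.range (n+1), g j := hmono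
    _ ≤ L ^ (-(p+1)) + 1 / (p * t) * (f 0 - f n) := key n
    _ ≤ 1/t * L ^ (-p) + 1 / (p * t) * f 0 := by
        have hpt : (0:ℝ) < p * t := mul_pos hp ht
        have : 1 / (p*t) * (f 0 - f n) ≤ 1/(p*t) * f 0 := by
          apply mul_le_mul_of_nonneg_left _ (by positivity)
          linarith
        linarith
    _ = (1 / t + 1 / (p * t)) * L ^ (-p) := by rw [hf0]; ring

end CampAux2

namespace CampAux3

lemma sq_average_le {α : Type*} [MeasurableSpace α] {ν : Measure α} [IsFiniteMeasure ν]
    {f : α → ℝ} (hf : MemLp f 2 ν) :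
    (⨍ y, f y ∂ν) ^ 2 ≤ ⨍ y, (f y) ^ 2 ∂ν := by
  by_cases hν : ν = 0
  · subst hν; simp [average_zero_measure]
  have hV : 0 < (ν Set.univ).toReal := by
    apply ENNReal.toReal_pos
    · simpa [Measure.measure_univ_ne_zero] using hν
    · exact (measure_lt_top ν _).ne
  set V : ℝ := (ν Set.univ).toReal with hVdef
  set b : ℝ := ⨍ y, f y ∂ν with hb
  have hf1 : Integrable f ν := hf.integrable one_le_two
  have hfsq : Integrable (fun y => (f y) ^ 2) ν := hf.integrable_sq
  have hIf : ∫ y, f y ∂ν = V * b := by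
    rw [hb, average_eq, smul_eq_mul]
    field_simp
    rw [measureReal_def, ← hVdef, mul_div_assoc, div_self hV.ne', mul_one]
  have hexp : ∫ y, (f y - b) ^ 2 ∂ν = ∫ y, (f y) ^ 2 ∂ν - 2 * b * (V * b) + b ^ 2 * V := by
    have : (fun y => (f y - b) ^ 2) = fun y => ((f y) ^ 2 - 2 * b * f y + b ^ 2) := by
      funext y; ring
    have e1 : ∫ y, ((f y) ^ 2 - 2 * b * f y + b ^ 2) ∂ν
        = (∫ y, ((f y) ^ 2 - 2 * b * f y) ∂ν) + ∫ _, (b ^ 2 : ℝ) ∂ν :=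
      integral_add (hfsq.sub (hf1.const_mul _)) (integrable_const _)
    have e2 : ∫ y, ((f y) ^ 2 - 2 * b * f y) ∂ν
        = (∫ y, (f y) ^ 2 ∂ν) - ∫ y, 2 * b * f y ∂ν := integral_sub hfsq (hf1.const_mul _)
    have e3 : ∫ y, 2 * b * f y ∂ν = 2 * b * ∫ y, f y ∂ν := integral_const_mul _ _
    rw [this, e1, e2, e3, hIf, integral_const, smul_eq_mul]
    rw [measureReal_def, ← hVdef]
    ring
  have hnn : 0 ≤ ∫ y, (f y - b) ^ 2 ∂ν := integral_nonneg fun y => sq_nonneg _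
  have hkey : b ^ 2 * V ≤ ∫ y, (f y) ^ 2 ∂ν := by nlinarith [hexp, hnn]
  rw [average_eq, smul_eq_mul]
  show b ^ 2 ≤ V⁻¹ * ∫ x, (f x) ^ 2 ∂ν
  rw [le_inv_mul_iff₀ hV]
  nlinarith

lemma abs_average_le {α : Type*} [MeasurableSpace α] {ν : Measure α} [IsFiniteMeasure ν]
    {f : α → ℝ} (hf : MemLp f 2 ν) :
    |⨍ y, f y ∂ν| ≤ Real.sqrt (⨍ y, (f y) ^ 2 ∂ν) := by
  rw [← Real.sqrt_sq_eq_abs]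
  exact Real.sqrt_le_sqrt (sq_average_le hf)

end CampAux3


namespace CampMain
open CampAux CampAux2 CampAux3

variable {m : ℕ}

lemma finiteOnBall (Ω : Set (EuclideanSpace ℝ (Fin m))) (x : EuclideanSpace ℝ (Fin m)) (ρ : ℝ) :
    IsFiniteMeasure (volume.restrict (Ω ∩ ball x ρ)) := by
  constructor
  rw [Measure.restrict_apply_univ]
  exact lt_of_le_of_lt (measure_mono Set.inter_subset_right) measure_ball_lt_top

lemma memLp_on_ball {Ω : Set (EuclideanSpace ℝ (Fin m))} (hΩ : IsOpen Ω)
    {u : EuclideanSpace ℝ (Fin m) → ℝ} (hu : MemLp u 2 (volume.restrict Ω))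
    (x : EuclideanSpace ℝ (Fin m)) (ρ : ℝ) :
    MemLp u 2 (volume.restrict (Ω ∩ ball x ρ)) := by
  have : volume.restrict (Ω ∩ ball x ρ) = (volume.restrict Ω).restrict (ball x ρ) := by
    rw [Measure.restrict_restrict measurableSet_ball, Set.inter_comm]
  rw [this]
  exact hu.restrict _

/-- Key comparison estimate between local averages on nested balls. -/
lemma avg_diff_le {Ω : Set (EuclideanSpace ℝ (Fin m))} {c κ S : ℝ}
    (hΩ : IsOpen Ω) (hc : 0 < c) (hdens : MeasureDensityCond Ω c)
    {u : EuclideanSpace ℝ (Fin m) → ℝ} (hu : MemLp u 2 (volume.restrict Ω))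
    (hS : CampanatoSeminormLE Ω u κ S)
    {x₀ x₁ : EuclideanSpace ℝ (Fin m)} (hx₀ : x₀ ∈ Ω) (hx₁ : x₁ ∈ Ω)
    {r ρ : ℝ} (hr : 0 < r) (hsub : ball x₁ r ⊆ ball x₀ ρ) (hrρ : r ≤ ρ) (hρ : ρ < 1/2) :
    |locAvg Ω u x₁ r - locAvg Ω u x₀ ρ| ≤
      S * Real.sqrt (ρ ^ m / (c * r ^ m)) * Real.log (1/ρ) ^ (-(κ/2)) := by
  have hρ0 : 0 < ρ := hr.trans_le hrρ
  have hr1 : r < 1 := lt_of_le_of_lt hrρ (by linarith)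
  set s₁ := Ω ∩ ball x₁ r with hs₁
  set s₀ := Ω ∩ ball x₀ ρ with hs₀
  have hss : s₁ ⊆ s₀ := Set.inter_subset_inter_right Ω hsub
  haveI := finiteOnBall Ω x₁ r
  haveI := finiteOnBall Ω x₀ ρ
  set L := Real.log (1/ρ) with hLdef
  have hL2 : Real.log 2 < L := by
    apply Real.log_lt_log two_pos
    rw [lt_div_iff₀ hρ0]; linarith
  have hL0 : 0 < L := lt_trans (Real.log_pos one_lt_two) hL2
  set b := locAvg Ω u x₀ ρ with hb
  -- volume bounds
  have hV₁ : c * r ^ m ≤ (volume s₁).toReal := hdens x₁ hx₁ r hr hr1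
  have hV₁pos : 0 < (volume s₁).toReal := lt_of_lt_of_le (by positivity) hV₁
  -- MemLp of u - b on s₁ and s₀
  have hmem₁ : MemLp (fun y => u y - b) 2 (volume.restrict s₁) :=
    (memLp_on_ball hΩ hu x₁ r).sub (memLp_const b)
  have hmem₀ : MemLp (fun y => u y - b) 2 (volume.restrict s₀) :=
    (memLp_on_ball hΩ hu x₀ ρ).sub (memLp_const b)
  -- the average of u - b over s₁ is locAvg - b
  have hu₁int : Integrable u (volume.restrict s₁) :=
    (memLp_on_ball hΩ hu x₁ r).integrable one_le_two
  have havg : ⨍ y in s₁, (u y - b) = locAvg Ω u x₁ r - b := by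
    rw [setAverage_eq, locAvg, setAverage_eq, integral_sub hu₁int (integrable_const b),
      setIntegral_const, smul_eq_mul, smul_eq_mul, smul_eq_mul]
    rw [mul_sub, ← mul_assoc, inv_mul_cancel₀ (show volume.real s₁ ≠ 0 from hV₁pos.ne'), one_mul]
  -- Jensen
  have hjensen : |locAvg Ω u x₁ r - b| ≤ Real.sqrt (⨍ y in s₁, (u y - b) ^ 2) := by
    rw [← havg]
    exact abs_average_le hmem₁
  -- bound the quadratic average
  have hκint : ∫ y in s₁, (u y - b) ^ 2 ≤ ∫ y in s₀, (u y - b) ^ 2 := by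
    apply setIntegral_mono_set hmem₀.integrable_sq
    · exact Filter.Eventually.of_forall fun y => sq_nonneg _
    · exact HasSubset.Subset.eventuallyLE hss
  have hcam : ∫ y in s₀, (u y - b) ^ 2 ≤ S ^ 2 * ρ ^ m * L ^ (-κ) := by
    have h := hS.2 x₀ hx₀ ρ hρ0 hρ
    have hρm : ρ ^ (-(m:ℝ)) = (ρ ^ m)⁻¹ := by
      rw [Real.rpow_neg hρ0.le, Real.rpow_natCast]
    have hLκ : L ^ (-κ) * L ^ κ = 1 := by
      rw [← Real.rpow_add hL0]; simp
    have hpos : 0 < (ρ ^ m)⁻¹ * L ^ κ := by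
      have : (0:ℝ) < L ^ κ := Real.rpow_pos_of_pos hL0 _
      positivity
    rw [hρm] at h
    have expand : S ^ 2 * ρ ^ m * L ^ (-κ) =
        (ρ ^ m * L ^ (-κ)) * (S ^ 2) := by ring
    have hI : (ρ ^ m)⁻¹ * L ^ κ * ∫ y in s₀, (u y - b) ^ 2 ≤ S ^ 2 := h
    have h2 := mul_le_mul_of_nonneg_left hI
      (le_of_lt (show (0:ℝ) < ρ ^ m * L ^ (-κ) by
        have : (0:ℝ) < L ^ (-κ) := Real.rpow_pos_of_pos hL0 _
        positivity))
    have hρm0 : (ρ:ℝ) ^ m ≠ 0 := by positivity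
    have hone : (ρ ^ m * L ^ (-κ)) * ((ρ ^ m)⁻¹ * L ^ κ) = 1 := by
      calc (ρ ^ m * L ^ (-κ)) * ((ρ ^ m)⁻¹ * L ^ κ)
          = (ρ ^ m * (ρ ^ m)⁻¹) * (L ^ (-κ) * L ^ κ) := by ring
        _ = 1 := by rw [mul_inv_cancel₀ hρm0, hLκ, one_mul]
    calc ∫ y in s₀, (u y - b) ^ 2
        = (ρ ^ m * L ^ (-κ)) * ((ρ ^ m)⁻¹ * L ^ κ * ∫ y in s₀, (u y - b) ^ 2) := by
          linear_combination -(∫ y in s₀, (u y - b) ^ 2) * hone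
      _ ≤ (ρ ^ m * L ^ (-κ)) * S ^ 2 := h2
      _ = S ^ 2 * ρ ^ m * L ^ (-κ) := by ring
  have hQ : ⨍ y in s₁, (u y - b) ^ 2 ≤ (c * r ^ m)⁻¹ * (S ^ 2 * ρ ^ m * L ^ (-κ)) := by
    rw [setAverage_eq, smul_eq_mul]
    have hnum : 0 ≤ ∫ y in s₁, (u y - b) ^ 2 := integral_nonneg fun y => sq_nonneg _
    have h1 : (volume s₁).toReal⁻¹ * ∫ y in s₁, (u y - b) ^ 2
        ≤ (c * r ^ m)⁻¹ * ∫ y in s₁, (u y - b) ^ 2 := by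
      apply mul_le_mul_of_nonneg_right _ hnum
      exact inv_anti₀ (by positivity) hV₁
    refine h1.trans ?_
    apply mul_le_mul_of_nonneg_left (hκint.trans hcam) (by positivity)
  -- conclude
  set R := S * Real.sqrt (ρ ^ m / (c * r ^ m)) * L ^ (-(κ/2)) with hR
  have hS0 : 0 ≤ S := hS.1
  have hRnn : 0 ≤ R := by
    have : (0:ℝ) ≤ L ^ (-(κ/2)) := (Real.rpow_pos_of_pos hL0 _).le
    positivity
  have hRsq : R ^ 2 = (c * r ^ m)⁻¹ * (S ^ 2 * ρ ^ m * L ^ (-κ)) := by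
    have e1 : (Real.sqrt (ρ ^ m / (c * r ^ m))) ^ 2 = ρ ^ m / (c * r ^ m) :=
      Real.sq_sqrt (by positivity)
    have e2 : (L ^ (-(κ/2))) ^ 2 = L ^ (-κ) := by
      rw [← Real.rpow_natCast (L ^ (-(κ/2))) 2, ← Real.rpow_mul hL0.le]
      norm_num
    calc R ^ 2 = S ^ 2 * (Real.sqrt (ρ ^ m / (c * r ^ m))) ^ 2 * (L ^ (-(κ/2))) ^ 2 := by ring
      _ = S ^ 2 * (ρ ^ m / (c * r ^ m)) * L ^ (-κ) := by rw [e1, e2]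
      _ = (c * r ^ m)⁻¹ * (S ^ 2 * ρ ^ m * L ^ (-κ)) := by ring
  have hd2 : |locAvg Ω u x₁ r - b| ^ 2 ≤ R ^ 2 := by
    have hQnn : 0 ≤ ⨍ y in s₁, (u y - b) ^ 2 := by
      rw [setAverage_eq, smul_eq_mul]
      have : 0 ≤ ∫ y in s₁, (u y - b) ^ 2 := integral_nonneg fun y => sq_nonneg _
      positivity
    have := pow_le_pow_left₀ (abs_nonneg _) hjensen 2
    rw [Real.sq_sqrt hQnn] at this
    rw [hRsq]
    exact this.trans hQ
  calc |locAvg Ω u x₁ r - b| = Real.sqrt (|locAvg Ω u x₁ r - b| ^ 2) := by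
        rw [Real.sqrt_sq (abs_nonneg _)]
    _ ≤ Real.sqrt (R ^ 2) := Real.sqrt_le_sqrt hd2
    _ = R := Real.sqrt_sq hRnn

/-- One dyadic halving step. -/
lemma avg_halve_le {Ω : Set (EuclideanSpace ℝ (Fin m))} {c κ S : ℝ}
    (hΩ : IsOpen Ω) (hc : 0 < c) (hdens : MeasureDensityCond Ω c)
    {u : EuclideanSpace ℝ (Fin m) → ℝ} (hu : MemLp u 2 (volume.restrict Ω))
    (hS : CampanatoSeminormLE Ω u κ S)
    {x : EuclideanSpace ℝ (Fin m)} (hx : x ∈ Ω)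
    {ρ : ℝ} (hρ0 : 0 < ρ) (hρ : ρ < 1/2) :
    |locAvg Ω u x (ρ/2) - locAvg Ω u x ρ| ≤
      S * Real.sqrt (2 ^ m / c) * Real.log (1/ρ) ^ (-(κ/2)) := by
  have h := avg_diff_le hΩ hc hdens hu hS hx hx (by positivity : 0 < ρ/2)
    (ball_subset_ball (by linarith)) (by linarith) hρ
  have harg : ρ ^ m / (c * (ρ/2) ^ m) = 2 ^ m / c := by
    rw [div_pow]
    field_simp
  rwa [harg] at h

/-- Dyadic chain estimate. -/
lemma avg_chain_le {Ω : Set (EuclideanSpace ℝ (Fin m))} {c κ S : ℝ}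
    (hΩ : IsOpen Ω) (hc : 0 < c) (hdens : MeasureDensityCond Ω c)
    {u : EuclideanSpace ℝ (Fin m) → ℝ} (hu : MemLp u 2 (volume.restrict Ω))
    (hS : CampanatoSeminormLE Ω u κ S)
    {x : EuclideanSpace ℝ (Fin m)} (hx : x ∈ Ω)
    {ρ : ℝ} (hρ0 : 0 < ρ) (hρ : ρ < 1/2) (n : ℕ) :
    |locAvg Ω u x (ρ/2^n) - locAvg Ω u x ρ| ≤
      S * Real.sqrt (2 ^ m / c) *
        ∑ j ∈ Finset.range n, (Real.log (1/ρ) + (j:ℝ) * Real.log 2) ^ (-(κ/2)) := by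
  set L := Real.log (1/ρ) with hL
  have hlog : ∀ k : ℕ, Real.log (1/(ρ/2^k)) = L + (k:ℝ) * Real.log 2 := by
    intro k
    have h2k : (0:ℝ) < 2^k := by positivity
    have : (1:ℝ)/(ρ/2^k) = 2^k * (1/ρ) := by field_simp
    rw [this, Real.log_mul (by positivity) (by positivity), Real.log_pow]
    ring
  induction n with
  | zero => simp
  | succ n ih =>
    have hρn : (0:ℝ) < ρ/2^n := by positivity
    have hρn2 : ρ/2^n < 1/2 :=
      lt_of_le_of_lt (div_le_self hρ0.le (one_le_pow₀ one_le_two)) hρ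
    have hstep := avg_halve_le hΩ hc hdens hu hS hx hρn hρn2
    have heq : ρ/2^n/2 = ρ/2^(n+1) := by
      rw [pow_succ]; ring
    rw [heq, hlog n] at hstep
    calc |locAvg Ω u x (ρ/2^(n+1)) - locAvg Ω u x ρ|
        ≤ |locAvg Ω u x (ρ/2^(n+1)) - locAvg Ω u x (ρ/2^n)| +
          |locAvg Ω u x (ρ/2^n) - locAvg Ω u x ρ| := abs_sub_le _ _ _
      _ ≤ S * Real.sqrt (2^m/c) * (L + (n:ℝ) * Real.log 2) ^ (-(κ/2)) +
          S * Real.sqrt (2^m/c) * ∑ j ∈ Finset.range n, (L + (j:ℝ) * Real.log 2) ^ (-(κ/2)) :=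
        add_le_add hstep ih
      _ = S * Real.sqrt (2^m/c) *
          ∑ j ∈ Finset.range (n+1), (L + (j:ℝ) * Real.log 2) ^ (-(κ/2)) := by
        rw [Finset.sum_range_succ]; ring

/-- General comparison of averages at two radii `r ≤ ρ` about the same center. -/
lemma avg_radii_le {Ω : Set (EuclideanSpace ℝ (Fin m))} {c κ S : ℝ} (hκ : 2 < κ)
    (hΩ : IsOpen Ω) (hc : 0 < c) (hdens : MeasureDensityCond Ω c)
    {u : EuclideanSpace ℝ (Fin m) → ℝ} (hu : MemLp u 2 (volume.restrict Ω))
    (hS : CampanatoSeminormLE Ω u κ S)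
    {x : EuclideanSpace ℝ (Fin m)} (hx : x ∈ Ω)
    {r ρ : ℝ} (hr : 0 < r) (hrρ : r ≤ ρ) (hρ : ρ < 1/2) :
    |locAvg Ω u x r - locAvg Ω u x ρ| ≤
      Real.sqrt (2 ^ m / c) * (2/Real.log 2 + 1/((κ/2-1) * Real.log 2)) * S *
        Real.log (1/ρ) ^ (-(κ/2-1)) := by
  have hρ0 : 0 < ρ := hr.trans_le hrρ
  set L := Real.log (1/ρ) with hLdef
  have hlog2 : (0:ℝ) < Real.log 2 := Real.log_pos one_lt_two
  have hL2 : Real.log 2 < L := by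
    apply Real.log_lt_log two_pos
    rw [lt_div_iff₀ hρ0]; linarith
  have hL0 : 0 < L := hlog2.trans hL2
  have hS0 : 0 ≤ S := hS.1
  set p : ℝ := κ/2 - 1 with hp
  have hp0 : 0 < p := by rw [hp]; linarith
  set A := Real.sqrt (2 ^ m / c) with hA
  have hA0 : 0 ≤ A := Real.sqrt_nonneg _
  -- choose the dyadic scale
  obtain ⟨n, hn1, hn2⟩ : ∃ n : ℕ, r ≤ ρ/2^n ∧ ρ/2^n < 2*r := by
    set q := Real.logb 2 (ρ/r) with hq
    have hq0 : 0 ≤ q := Real.logb_nonneg one_lt_two ((one_le_div hr).2 hrρ)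
    refine ⟨⌊q⌋₊, ?_, ?_⟩
    · rw [le_div_iff₀ (by positivity : (0:ℝ) < 2^(⌊q⌋₊ : ℕ))]
      have h1 : ((2:ℝ)^(⌊q⌋₊:ℕ) : ℝ) = (2:ℝ) ^ ((⌊q⌋₊ : ℝ)) := by
        rw [Real.rpow_natCast]
      have h2 : (2:ℝ) ^ ((⌊q⌋₊:ℝ)) ≤ (2:ℝ) ^ q :=
        Real.rpow_le_rpow_of_exponent_le one_le_two (Nat.floor_le hq0)
      have h3 : (2:ℝ) ^ q = ρ/r := Real.rpow_logb two_pos (by norm_num) (by positivity)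
      calc r * (2:ℝ)^(⌊q⌋₊:ℕ) = (2:ℝ)^((⌊q⌋₊:ℝ)) * r := by rw [h1]; ring
        _ ≤ (ρ/r) * r := by
            apply mul_le_mul_of_nonneg_right (h2.trans_eq h3) hr.le
        _ = ρ := by field_simp
    · rw [div_lt_iff₀ (by positivity : (0:ℝ) < 2^(⌊q⌋₊ : ℕ))]
      have h3 : ρ/r = (2:ℝ) ^ q := (Real.rpow_logb two_pos (by norm_num) (by positivity)).symm
      have h4 : (2:ℝ) ^ q < (2:ℝ) ^ ((⌊q⌋₊:ℝ) + 1) :=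
        Real.rpow_lt_rpow_of_exponent_lt one_lt_two (Nat.lt_floor_add_one q)
      have h5 : (2:ℝ) ^ ((⌊q⌋₊:ℝ) + 1) = 2 * 2^(⌊q⌋₊:ℕ) := by
        rw [Real.rpow_add two_pos, Real.rpow_one, Real.rpow_natCast]; ring
      have : ρ/r < 2 * 2^(⌊q⌋₊:ℕ) := by rw [h3]; rw [h5] at h4; exact h4
      calc ρ = (ρ/r) * r := by field_simp
        _ < (2 * 2^(⌊q⌋₊:ℕ)) * r := by
            apply mul_lt_mul_of_pos_right this hr
        _ = 2 * r * 2^(⌊q⌋₊:ℕ) := by ring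
  set ρ' := ρ/2^n with hρ'
  have hρ'0 : 0 < ρ' := by positivity
  have hρ'ρ : ρ' ≤ ρ := by
    rw [hρ']
    exact div_le_self hρ0.le (one_le_pow₀ one_le_two)
  have hρ'2 : ρ' < 1/2 := lt_of_le_of_lt hρ'ρ hρ
  have hLρ' : L ≤ Real.log (1/ρ') := by
    apply Real.log_le_log (by positivity)
    exact one_div_le_one_div_of_le hρ'0 hρ'ρ
  have hLρ'0 : 0 < Real.log (1/ρ') := hL0.trans_le hLρ'
  have hκ2 : -(κ/2) ≤ 0 := by linarith
  -- chain part
  have hchain := avg_chain_le hΩ hc hdens hu hS hx hρ0 hρ n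
  have hsum := CampAux2.sum_bound (p := p) (t := Real.log 2) (L := L) hp0 hlog2 hL2.le n
  have hexp : -(p + 1) = -(κ/2) := by rw [hp]; ring
  simp only [hexp] at hsum
  have hchain2 : |locAvg Ω u x ρ' - locAvg Ω u x ρ| ≤
      S * A * ((1/Real.log 2 + 1/(p * Real.log 2)) * L ^ (-p)) := by
    refine hchain.trans ?_
    apply mul_le_mul_of_nonneg_left hsum (by positivity)
  -- last step: from r to ρ'
  have hlast := avg_diff_le hΩ hc hdens hu hS hx hx hr
    (ball_subset_ball hn1) hn1 hρ'2
  have hsqrt : Real.sqrt (ρ' ^ m / (c * r ^ m)) ≤ A := by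
    rw [hA]
    apply Real.sqrt_le_sqrt
    have h1 : ρ' ^ m ≤ 2 ^ m * r ^ m := by
      rw [← mul_pow]
      exact pow_le_pow_left₀ hρ'0.le hn2.le m
    rw [div_le_div_iff₀ (by positivity) hc]
    calc ρ' ^ m * c ≤ 2 ^ m * r ^ m * c := by
          apply mul_le_mul_of_nonneg_right h1 hc.le
      _ = 2 ^ m * (c * r ^ m) := by ring
  have hpow : Real.log (1/ρ') ^ (-(κ/2)) ≤ L ^ (-(κ/2)) :=
    Real.rpow_le_rpow_of_nonpos hL0 hLρ' hκ2
  have hLp : L ^ (-(κ/2)) ≤ L ^ (-p) / Real.log 2 := by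
    have e : L ^ (-(κ/2)) = L ^ (-p) * L⁻¹ := by
      rw [← Real.rpow_neg_one L, ← Real.rpow_add hL0]
      congr 1
      rw [hp]; ring
    rw [e, div_eq_mul_inv]
    apply mul_le_mul_of_nonneg_left _ (Real.rpow_nonneg hL0.le _)
    exact inv_anti₀ hlog2 hL2.le
  have hlast2 : |locAvg Ω u x r - locAvg Ω u x ρ'| ≤ S * A * (L ^ (-p) / Real.log 2) := by
    refine hlast.trans ?_
    have hpow' : Real.log (1/ρ') ^ (-(κ/2)) ≤ L ^ (-p) / Real.log 2 := hpow.trans hLp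
    calc S * Real.sqrt (ρ' ^ m / (c * r ^ m)) * Real.log (1/ρ') ^ (-(κ/2))
        ≤ S * A * Real.log (1/ρ') ^ (-(κ/2)) := by
          apply mul_le_mul_of_nonneg_right _ (Real.rpow_nonneg hLρ'0.le _)
          exact mul_le_mul_of_nonneg_left hsqrt hS0
      _ ≤ S * A * (L ^ (-p) / Real.log 2) := by
          apply mul_le_mul_of_nonneg_left hpow' (by positivity)
  calc |locAvg Ω u x r - locAvg Ω u x ρ|
      ≤ |locAvg Ω u x r - locAvg Ω u x ρ'| + |locAvg Ω u x ρ' - locAvg Ω u x ρ| :=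
        abs_sub_le _ _ _
    _ ≤ S * A * (L ^ (-p) / Real.log 2) +
        S * A * ((1/Real.log 2 + 1/(p * Real.log 2)) * L ^ (-p)) := add_le_add hlast2 hchain2
    _ = A * (2/Real.log 2 + 1/(p * Real.log 2)) * S * L ^ (-p) := by
        field_simp
        ring

end CampMain

/-- Functions in the generalized Campanato space with `κ > 2` have a continuous
representative with a logarithmic modulus of continuity. -/
theorem campanato_continuous_representative {m : ℕ} (hm : 1 ≤ m) (κ c : ℝ)
    (hκ : 2 < κ) (hc : 0 < c) :
    ∃ C : ℝ, 0 < C ∧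
      ∀ (Ω : Set (EuclideanSpace ℝ (Fin m))), IsOpen Ω → MeasureDensityCond Ω c →
        ∀ (u : EuclideanSpace ℝ (Fin m) → ℝ), MemLp u 2 (volume.restrict Ω) →
          ∀ S : ℝ, CampanatoSeminormLE Ω u κ S →
            ∃ utilde : EuclideanSpace ℝ (Fin m) → ℝ, ContinuousOn utilde Ω ∧
              (∀ᵐ x ∂(volume.restrict Ω), utilde x = u x) ∧
              (∀ x ∈ Ω, ∀ y ∈ Ω, x ≠ y → dist x y < 1/4 →
                |utilde x - utilde y| ≤
                  C * S * (Real.log (1 / dist x y)) ^ (-(κ / 2 - 1))) := by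
  have hlog2 : (0:ℝ) < Real.log 2 := Real.log_pos one_lt_two
  set p : ℝ := κ/2 - 1 with hp
  have hp0 : 0 < p := by rw [hp]; linarith
  set A := Real.sqrt ((2:ℝ) ^ m / c) with hA
  have hA0 : 0 < A := Real.sqrt_pos.2 (by positivity)
  set M₁ := A * (2/Real.log 2 + 1/(p * Real.log 2)) with hM₁
  have hM₁0 : 0 < M₁ := by rw [hM₁]; positivity
  set C := M₁ * (1 + (2:ℝ) ^ p) + A * (2:ℝ) ^ (κ/2) / (2 * Real.log 2) with hC
  have hC0 : 0 < C := by
    rw [hC]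
    have h1 : (0:ℝ) < (2:ℝ) ^ p := Real.rpow_pos_of_pos two_pos _
    have h2 : (0:ℝ) < (2:ℝ) ^ (κ/2) := Real.rpow_pos_of_pos two_pos _
    positivity
  refine ⟨C, hC0, ?_⟩
  intro Ω hΩ hdens u hu S hS
  have hS0 : 0 ≤ S := hS.1
  -- the dyadic radii
  set r : ℕ → ℝ := fun k => (1/2:ℝ)^(k+3) with hrdef
  have hrpos : ∀ k, 0 < r k := fun k => by rw [hrdef]; positivity
  have hranti : ∀ k l : ℕ, k ≤ l → r l ≤ r k := fun k l h =>
    pow_le_pow_of_le_one (by norm_num) (by norm_num) (by omega)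
  have hrlt : ∀ k, r k < 1/2 := by
    intro k
    calc r k ≤ (1/2:ℝ)^(0+3) := hranti 0 k (Nat.zero_le k)
      _ < 1/2 := by norm_num
  have hrlog : ∀ k, Real.log (1/(r k)) = ((k:ℝ)+3) * Real.log 2 := by
    intro k
    have h1 : (1:ℝ)/(r k) = 2^(k+3) := by
      rw [hrdef, one_div, ← inv_pow]
      norm_num
    rw [h1, Real.log_pow]
    push_cast; ring
  set a : EuclideanSpace ℝ (Fin m) → ℕ → ℝ := fun x k => locAvg Ω u x (r k) with ha
  -- tail estimate
  have htail : ∀ x ∈ Ω, ∀ k l : ℕ, k ≤ l →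
      |a x l - a x k| ≤ M₁ * S * (((k:ℝ)+3) * Real.log 2) ^ (-p) := by
    intro x hx k l hkl
    have h := CampMain.avg_radii_le hκ hΩ hc hdens hu hS hx (hrpos l) (hranti k l hkl) (hrlt k)
    rw [hrlog k, ← hp] at h
    exact h.trans_eq (by rw [hM₁])
  -- basic positivity of the scale
  have hsc : ∀ k : ℕ, (0:ℝ) < ((k:ℝ)+3) * Real.log 2 := by
    intro k
    have : (0:ℝ) < (k:ℝ)+3 := by positivity
    positivity
  -- the bound sequence tends to 0
  have hb0 : Tendsto (fun N:ℕ => M₁ * S * (((N:ℝ)+3) * Real.log 2) ^ (-p)) atTop (𝓝 0) := by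
    have h1 : Tendsto (fun N:ℕ => ((N:ℝ)+3) * Real.log 2) atTop atTop := by
      apply Tendsto.atTop_mul_const hlog2
      exact tendsto_atTop_add_const_right atTop 3 tendsto_natCast_atTop_atTop
    have h2 := (tendsto_rpow_neg_atTop hp0).comp h1
    have h3 := h2.const_mul (M₁ * S)
    simpa using h3
  -- Cauchy property
  have hcauchy : ∀ x ∈ Ω, CauchySeq (a x) := by
    intro x hx
    apply cauchySeq_of_le_tendsto_0 (fun N : ℕ => M₁ * S * (((N:ℝ)+3) * Real.log 2) ^ (-p)) _ hb0
    intro n m' N hn hm'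
    have key : ∀ k l : ℕ, N ≤ k → k ≤ l →
        |a x l - a x k| ≤ M₁ * S * (((N:ℝ)+3) * Real.log 2) ^ (-p) := by
      intro k l hNk hkl
      refine (htail x hx k l hkl).trans ?_
      apply mul_le_mul_of_nonneg_left _ (by positivity)
      apply Real.rpow_le_rpow_of_nonpos (hsc N) _ (by linarith)
      have : ((N:ℝ)+3) ≤ ((k:ℝ)+3) := by
        have := (Nat.cast_le (α := ℝ)).2 hNk
        linarith
      exact mul_le_mul_of_nonneg_right this hlog2.le
    rcases le_total n m' with h | h
    · rw [Real.dist_eq, abs_sub_comm]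
      exact key n m' hn h
    · rw [Real.dist_eq]
      exact key m' n hm' h
  set utilde : EuclideanSpace ℝ (Fin m) → ℝ := fun x => limUnder atTop (a x) with hut
  have htendsto : ∀ x ∈ Ω, Tendsto (a x) atTop (𝓝 (utilde x)) := fun x hx =>
    (hcauchy x hx).tendsto_limUnder
  -- quantitative tail bound for the limit
  have hT : ∀ x ∈ Ω, ∀ ρ : ℝ, 0 < ρ → ρ < 1/2 →
      |utilde x - locAvg Ω u x ρ| ≤ M₁ * S * Real.log (1/ρ) ^ (-p) := by
    intro x hx ρ hρ0 hρ2
    have hrtend : Tendsto r atTop (𝓝 0) := by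
      rw [hrdef]
      have := tendsto_pow_atTop_nhds_zero_of_lt_one (by norm_num : (0:ℝ) ≤ 1/2)
        (by norm_num : (1/2:ℝ) < 1)
      exact this.comp (tendsto_add_atTop_nat 3)
    have hev : ∀ᶠ k in atTop, r k ≤ ρ := hrtend.eventually_le_const hρ0
    have hbd : ∀ᶠ k in atTop, |a x k - locAvg Ω u x ρ| ≤ M₁ * S * Real.log (1/ρ) ^ (-p) := by
      filter_upwards [hev] with k hk
      have h := CampMain.avg_radii_le hκ hΩ hc hdens hu hS hx (hrpos k) hk hρ2
      rw [← hp] at h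
      exact h.trans_eq (by rw [hM₁])
    have htendabs : Tendsto (fun k => |a x k - locAvg Ω u x ρ|) atTop
        (𝓝 |utilde x - locAvg Ω u x ρ|) := ((htendsto x hx).sub_const _).abs
    exact le_of_tendsto htendabs hbd
  -- the modulus of continuity
  have hMod : ∀ x ∈ Ω, ∀ y ∈ Ω, x ≠ y → dist x y < 1/4 →
      |utilde x - utilde y| ≤ C * S * Real.log (1/dist x y) ^ (-p) := by
    intro x hx y hy hne hd4
    set d := dist x y with hd
    have hd0 : 0 < d := dist_pos.2 hne
    set L := Real.log (1/d) with hLdef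
    have hlog4 : Real.log 4 = 2 * Real.log 2 := by
      rw [show (4:ℝ) = 2^2 by norm_num, Real.log_pow]
      push_cast; ring
    have hL4 : 2 * Real.log 2 < L := by
      rw [← hlog4]
      apply Real.log_lt_log (by norm_num)
      rw [lt_div_iff₀ hd0]; linarith
    have hL0 : 0 < L := by linarith
    have hLp0 : (0:ℝ) ≤ L ^ (-p) := Real.rpow_nonneg hL0.le _
    have h2d0 : 0 < 2*d := by linarith
    have h2d2 : 2*d < 1/2 := by linarith
    -- T1 and T3
    have hT1 := hT x hx (2*d) h2d0 h2d2
    have hT3 := hT y hy d hd0 (by linarith)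
    -- middle term
    have hmid := CampMain.avg_diff_le hΩ hc hdens hu hS hx hy hd0
      (ball_subset_ball' (by rw [dist_comm]; linarith : d + dist y x ≤ 2*d))
      (by linarith : d ≤ 2*d) h2d2
    have hargeq : (2*d)^m/(c*d^m) = 2^m/c := by
      rw [mul_pow]
      have hdm : d^m ≠ 0 := by positivity
      field_simp
    rw [hargeq, ← hA] at hmid
    -- relate log(1/(2d)) with L
    have hlog2d : Real.log (1/(2*d)) = L - Real.log 2 := by
      rw [hLdef, show (1:ℝ)/(2*d) = (1/d)/2 by ring, Real.log_div (by positivity) (by norm_num)]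
    have hhalf : L/2 ≤ Real.log (1/(2*d)) := by rw [hlog2d]; linarith
    have hhalf0 : (0:ℝ) < L/2 := by linarith
    -- bound T1's coefficient
    have hb1 : Real.log (1/(2*d)) ^ (-p) ≤ (2:ℝ)^p * L ^ (-p) := by
      have h1 : Real.log (1/(2*d)) ^ (-p) ≤ (L/2) ^ (-p) :=
        Real.rpow_le_rpow_of_nonpos hhalf0 hhalf (by linarith)
      have h2 : (L/2 : ℝ) ^ (-p) = (2:ℝ)^p * L ^ (-p) := by
        rw [div_eq_mul_inv, Real.mul_rpow hL0.le (by norm_num),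
          Real.inv_rpow (by norm_num : (0:ℝ) ≤ 2), Real.rpow_neg (by norm_num : (0:ℝ) ≤ 2),
          inv_inv]
        ring
      rw [h2] at h1; exact h1
    -- bound the middle coefficient
    have hb2 : Real.log (1/(2*d)) ^ (-(κ/2)) ≤ (2:ℝ)^(κ/2) * (L ^ (-p) / (2 * Real.log 2)) := by
      have h1 : Real.log (1/(2*d)) ^ (-(κ/2)) ≤ (L/2) ^ (-(κ/2)) :=
        Real.rpow_le_rpow_of_nonpos hhalf0 hhalf (by linarith)
      have h2 : (L/2 : ℝ) ^ (-(κ/2)) = (2:ℝ)^(κ/2) * L ^ (-(κ/2)) := by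
        rw [div_eq_mul_inv, Real.mul_rpow hL0.le (by norm_num),
          Real.inv_rpow (by norm_num : (0:ℝ) ≤ 2), Real.rpow_neg (by norm_num : (0:ℝ) ≤ 2),
          inv_inv]
        ring
      have h3 : L ^ (-(κ/2)) ≤ L ^ (-p) / (2 * Real.log 2) := by
        have e : L ^ (-(κ/2)) = L ^ (-p) * L⁻¹ := by
          rw [← Real.rpow_neg_one L, ← Real.rpow_add hL0]
          congr 1
          rw [hp]; ring
        rw [e, div_eq_mul_inv]
        apply mul_le_mul_of_nonneg_left _ hLp0
        exact inv_anti₀ (by linarith) hL4.le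
      calc Real.log (1/(2*d)) ^ (-(κ/2)) ≤ (2:ℝ)^(κ/2) * L ^ (-(κ/2)) := by rw [← h2]; exact h1
        _ ≤ (2:ℝ)^(κ/2) * (L ^ (-p) / (2 * Real.log 2)) := by
            apply mul_le_mul_of_nonneg_left h3 (Real.rpow_nonneg (by norm_num) _)
    -- combine
    have hT1' : |utilde x - locAvg Ω u x (2*d)| ≤ M₁ * S * ((2:ℝ)^p * L ^ (-p)) := by
      refine hT1.trans ?_
      exact mul_le_mul_of_nonneg_left hb1 (by positivity)
    have hmid' : |locAvg Ω u y d - locAvg Ω u x (2*d)| ≤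
        S * A * ((2:ℝ)^(κ/2) * (L ^ (-p) / (2 * Real.log 2))) := by
      refine hmid.trans ?_
      exact mul_le_mul_of_nonneg_left hb2 (by positivity)
    have hT3' : |utilde y - locAvg Ω u y d| ≤ M₁ * S * L ^ (-p) := hT3
    calc |utilde x - utilde y|
        ≤ |utilde x - locAvg Ω u x (2*d)| + |locAvg Ω u x (2*d) - utilde y| :=
          abs_sub_le _ _ _
      _ ≤ |utilde x - locAvg Ω u x (2*d)| +
          (|locAvg Ω u x (2*d) - locAvg Ω u y d| + |locAvg Ω u y d - utilde y|) := by
          have := abs_sub_le (locAvg Ω u x (2*d)) (locAvg Ω u y d) (utilde y)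
          linarith
      _ ≤ M₁ * S * ((2:ℝ)^p * L ^ (-p)) +
          (S * A * ((2:ℝ)^(κ/2) * (L ^ (-p) / (2 * Real.log 2))) + M₁ * S * L ^ (-p)) := by
          rw [abs_sub_comm (locAvg Ω u x (2*d)) (locAvg Ω u y d),
            abs_sub_comm (locAvg Ω u y d) (utilde y)]
          exact add_le_add hT1' (add_le_add hmid' hT3')
      _ = C * S * L ^ (-p) := by rw [hC]; field_simp; ring
  refine ⟨utilde, ?_, ?_, ?_⟩
  · -- continuity
    rw [Metric.continuousOn_iff]
    intro x hx ε hε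
    have htend0 : Tendsto (fun t:ℝ => C * S * Real.log (1/t) ^ (-p)) (𝓝[>] (0:ℝ)) (𝓝 0) := by
      have h1 : Tendsto (fun t:ℝ => 1/t) (𝓝[>] (0:ℝ)) atTop := by
        simpa [one_div] using (tendsto_inv_nhdsGT_zero (𝕜 := ℝ))
      have h2 := (tendsto_rpow_neg_atTop hp0).comp (Real.tendsto_log_atTop.comp h1)
      simpa using h2.const_mul (C * S)
    have hev := htend0.eventually_lt_const hε
    obtain ⟨δ, hδpos, hδ⟩ : ∃ δ, 0 < δ ∧ ∀ t : ℝ, 0 < t → t < δ →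
        C * S * Real.log (1/t) ^ (-p) < ε := by
      obtain ⟨b, hb, hsub⟩ := mem_nhdsGT_iff_exists_Ioo_subset.1 hev
      exact ⟨b, hb, fun t ht htb => hsub ⟨ht, htb⟩⟩
    refine ⟨min δ (1/4), lt_min hδpos (by norm_num), ?_⟩
    intro y hy hdist
    by_cases hxy : y = x
    · subst hxy; simpa using hε
    · have hd4 : dist y x < 1/4 := lt_of_lt_of_le hdist (min_le_right _ _)
      have hdδ : dist y x < δ := lt_of_lt_of_le hdist (min_le_left _ _)
      have hmod := hMod y hy x hx hxy hd4
      rw [Real.dist_eq]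
      calc |utilde y - utilde x| ≤ C * S * Real.log (1/dist y x) ^ (-p) := hmod
        _ < ε := hδ _ (dist_pos.2 hxy) hdδ
  · -- a.e. equality with u
    haveI : Nontrivial (EuclideanSpace ℝ (Fin m)) := by
      refine ⟨⟨EuclideanSpace.single ⟨0, hm⟩ (1:ℝ), 0, fun h => ?_⟩⟩
      have h2 := congrArg (fun v : EuclideanSpace ℝ (Fin m) => v ⟨0, hm⟩) h
      simp only [EuclideanSpace.single_apply] at h2
      simp at h2
    set μ := volume.restrict Ω with hμ
    haveI : IsLocallyFiniteMeasure μ := Measure.isLocallyFiniteMeasure_of_le Measure.restrict_le_self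
    have hloc : LocallyIntegrable u μ := hu.locallyIntegrable one_le_two
    have hvit := (Besicovitch.vitaliFamily μ).ae_tendsto_average hloc
    have hrtend : Tendsto r atTop (𝓝 0) := by
      rw [hrdef]
      have := tendsto_pow_atTop_nhds_zero_of_lt_one (by norm_num : (0:ℝ) ≤ 1/2)
        (by norm_num : (1/2:ℝ) < 1)
      exact this.comp (tendsto_add_atTop_nat 3)
    have hsetseq : ∀ x, Tendsto (fun k => closedBall x (r k)) atTop
        ((Besicovitch.vitaliFamily μ).filterAt x) := by
      intro x
      apply (Besicovitch.tendsto_filterAt μ x).comp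
      apply tendsto_nhdsWithin_of_tendsto_nhds_of_eventually_within _ hrtend
      exact Eventually.of_forall fun k => hrpos k
    have heq : ∀ (x : EuclideanSpace ℝ (Fin m)) (k : ℕ),
        a x k = ⨍ y in closedBall x (r k), u y ∂μ := by
      intro x k
      have hsph : volume (sphere x (r k)) = 0 := Measure.addHaar_sphere volume x (r k)
      have hμsph : μ (sphere x (r k)) = 0 := by
        rw [hμ, Measure.restrict_apply' hΩ.measurableSet]
        exact measure_mono_null Set.inter_subset_left hsph
      have hae : closedBall x (r k) =ᵐ[μ] ball x (r k) := by
        rw [MeasureTheory.ae_eq_set]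
        constructor
        · rw [closedBall_diff_ball]
          exact hμsph
        · rw [Set.diff_eq_empty.2 ball_subset_closedBall]
          exact measure_empty
      have hrest : μ.restrict (ball x (r k)) = volume.restrict (Ω ∩ ball x (r k)) := by
        rw [hμ, Measure.restrict_restrict measurableSet_ball, Set.inter_comm]
      calc a x k = ⨍ y in ball x (r k), u y ∂μ := by
            show average (volume.restrict (Ω ∩ ball x (r k))) u = average (μ.restrict (ball x (r k))) u
            rw [hrest]
        _ = ⨍ y in closedBall x (r k), u y ∂μ := (setAverage_congr hae).symm
    filter_upwards [hvit, ae_restrict_mem hΩ.measurableSet] with x hxvit hxΩ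
    have h1 : Tendsto (a x) atTop (𝓝 (u x)) := by
      have h2 := hxvit.comp (hsetseq x)
      apply h2.congr
      intro k
      exact (heq x k).symm
    exact tendsto_nhds_unique (htendsto x hxΩ) h1
  · -- modulus of continuity
    intro x hx y hy hne hd
    exact hMod x hx y hy hne hd
end
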